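/- arXiv:1308.6539 — 5 statements merged into one kernel-verified Lean document; each statement's English description precedes it below -/
import Mathlib

section
/- Let f be a hyperbolic homeomorphism of a compact metric space (M,d) with contraction rate λ > 0, and let A: M → GL(d,ℝ) be Lipschitz continuous satisfying the fiber bunching condition: there exist C₃ > 0 and 0 < θ < λ such that ‖Aⁿ(x)‖·‖Aⁿ(x)⁻¹‖ ≤ C₃e^{θn} for all x ∈ M and n ≥ 0. Then there exists a constant C > 0 (depending only on A and f) such that for every x ∈ M and all y, z in the local stable set W^s_ε(x), one has ‖Aⁿ(y)‖·‖Aⁿ(z)⁻¹‖ ≤ C e^{nθ} for all n ≥ 0. -/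
open Filter Topology Metric Matrix
open scoped Matrix.Norms.L2Operator
noncomputable section

def cocycle {M G : Type*} [Group G] (f : M → M) (A : M → G) : ℕ → M → G
  | 0, _ => 1
  | n + 1, x => A (f^[n] x) * cocycle f A n x

def zcocycle {M G : Type*} [Group G] (f : M ≃ M) (A : M → G) : ℤ → M → G
  | Int.ofNat m, x => cocycle (⇑f) A m x
  | Int.negSucc m, x => (cocycle (⇑f) A (m + 1) ((⇑f.symm)^[m + 1] x))⁻¹

def zit {M : Type*} (f : M ≃ M) : ℤ → M → M
  | Int.ofNat m, x => (⇑f)^[m] x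
  | Int.negSucc m, x => (⇑f.symm)^[m + 1] x

def gnorm {d : ℕ} (g : GL (Fin d) ℝ) : ℝ := ‖(g : Matrix (Fin d) (Fin d) ℝ)‖

def stableSet {M : Type*} [PseudoMetricSpace M] (f : M → M) (x : M) : Set M :=
  {y | Tendsto (fun n : ℕ => dist (f^[n] x) (f^[n] y)) atTop (𝓝 0)}

def localStable {M : Type*} [PseudoMetricSpace M] (f : M → M) (ε : ℝ) (x : M) : Set M :=
  {y | ∀ n : ℕ, dist (f^[n] x) (f^[n] y) ≤ ε}

structure IsHyperbolic {M : Type*} [MetricSpace M] (f : M ≃ M) (C₁ lam ε τ : ℝ) : Prop where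
  cont : Continuous f
  cont_symm : Continuous f.symm
  C₁_pos : 0 < C₁
  lam_pos : 0 < lam
  eps_pos : 0 < ε
  tau_pos : 0 < τ
  stable_contr : ∀ x y z, y ∈ localStable (⇑f) ε x → z ∈ localStable (⇑f) ε x →
    ∀ n : ℕ, dist ((⇑f)^[n] y) ((⇑f)^[n] z) ≤ C₁ * Real.exp (-lam * n) * dist y z
  unstable_contr : ∀ x y z, y ∈ localStable (⇑f.symm) ε x → z ∈ localStable (⇑f.symm) ε x →
    ∀ n : ℕ, dist ((⇑f.symm)^[n] y) ((⇑f.symm)^[n] z) ≤ C₁ * Real.exp (-lam * n) * dist y z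
  bracket : ∃ br : M → M → M,
    ContinuousOn (fun p : M × M => br p.1 p.2) {p | dist p.1 p.2 < τ} ∧
    ∀ x y, dist x y < τ → localStable (⇑f) ε x ∩ localStable (⇑f.symm) ε y = {br x y}

def FiberBunched {M : Type*} {d : ℕ} (f : M → M) (A : M → GL (Fin d) ℝ) (θ : ℝ) : Prop :=
  ∃ C₃ > (0 : ℝ), ∀ (x : M) (n : ℕ),
    gnorm (cocycle f A n x) * gnorm ((cocycle f A n x)⁻¹) ≤ C₃ * Real.exp (θ * n)

/-!
Along a local stable set the orbits of `y` and `x` approach each other at rate `e^{-λn}`, so the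
holonomy matrices `Hₙ = Aⁿ(x)⁻¹ Aⁿ(y)` satisfy `‖Hₙ₊₁‖ ≤ ‖Hₙ‖ (1 + bₙ)` with
`bₙ = ‖Aⁿ(x)‖ ‖Aⁿ(x)⁻¹‖ ‖A(fⁿx)⁻¹‖ ‖A(fⁿy) - A(fⁿx)‖ ≲ e^{θn} e^{-λn}`. Fiber bunching `θ < λ` makes
`∑ bₙ` converge, so `‖Hₙ‖` is uniformly bounded, and then
`‖Aⁿ(y)‖ ‖Aⁿ(z)⁻¹‖ ≤ ‖Aⁿ(x)‖ ‖Aⁿ(x)⁻¹‖ ‖Hₙ(x, y)‖ ‖Hₙ(z, x)‖ ≲ e^{θn}`.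
-/

open Finset

lemma gnorm_nonneg {d : ℕ} (g : GL (Fin d) ℝ) : 0 ≤ gnorm g := norm_nonneg _

lemma gnorm_mul_le {d : ℕ} (g h : GL (Fin d) ℝ) : gnorm (g * h) ≤ gnorm g * gnorm h :=
  norm_mul_le _ _

lemma gnorm_one_le {d : ℕ} : gnorm (1 : GL (Fin d) ℝ) ≤ 1 := by
  rw [gnorm, Units.val_one, Matrix.cstar_norm_def, map_one, ContinuousLinearMap.one_def]
  exact ContinuousLinearMap.norm_id_le

lemma gnorm_mul_gnorm_inv_le {d : ℕ} (x y z : GL (Fin d) ℝ) :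
    gnorm y * gnorm z⁻¹ ≤ gnorm x * gnorm x⁻¹ * (gnorm (x⁻¹ * y) * gnorm (z⁻¹ * x)) := by
  calc gnorm y * gnorm z⁻¹ = gnorm (x * (x⁻¹ * y)) * gnorm (z⁻¹ * x * x⁻¹) := by group
    _ ≤ gnorm x * gnorm (x⁻¹ * y) * (gnorm (z⁻¹ * x) * gnorm x⁻¹) := by
      gcongr
      · exact gnorm_nonneg _
      · exact mul_nonneg (gnorm_nonneg _) (gnorm_nonneg _)
      · exact gnorm_mul_le _ _
      · exact gnorm_mul_le _ _
    _ = gnorm x * gnorm x⁻¹ * (gnorm (x⁻¹ * y) * gnorm (z⁻¹ * x)) := by ring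

lemma Units.norm_inv_mul_mul_le {R : Type*} [NormedRing R] (a b c e : Rˣ) :
    ‖(↑((a * c)⁻¹ * (b * e)) : R)‖ ≤
      ‖(↑(c⁻¹ * e) : R)‖ * (1 + ‖(c : R)‖ * ‖(↑c⁻¹ : R)‖ * ‖(↑a⁻¹ : R)‖ * ‖(b : R) - a‖) := by
  set H : R := ↑(c⁻¹ * e)
  have hexpand : (↑((a * c)⁻¹ * (b * e)) : R) = H + ↑c⁻¹ * (↑a⁻¹ * ((b - a : R) * (c * H))) := by
    have hH : (c : R) * H = e := by simp [H]
    rw [hH]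
    simp only [H, _root_.mul_inv_rev, Units.val_mul, mul_sub, sub_mul, mul_assoc,
      Units.inv_mul_cancel_left]
    abel
  rw [hexpand]
  calc ‖H + ↑c⁻¹ * (↑a⁻¹ * ((b - a : R) * (c * H)))‖
      ≤ ‖H‖ + ‖(↑c⁻¹ : R)‖ * (‖(↑a⁻¹ : R)‖ * (‖(b : R) - a‖ * (‖(c : R)‖ * ‖H‖))) := by
        refine (norm_add_le _ _).trans (add_le_add le_rfl ?_)
        refine (norm_mul_le _ _).trans (mul_le_mul_of_nonneg_left ?_ (norm_nonneg _))
        refine (norm_mul_le _ _).trans (mul_le_mul_of_nonneg_left ?_ (norm_nonneg _))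
        exact (norm_mul_le _ _).trans (mul_le_mul_of_nonneg_left (norm_mul_le _ _) (norm_nonneg _))
    _ = ‖H‖ * (1 + ‖(c : R)‖ * ‖(↑c⁻¹ : R)‖ * ‖(↑a⁻¹ : R)‖ * ‖(b : R) - a‖) := by ring

lemma le_exp_sum_of_le_mul_one_add {x b : ℕ → ℝ} (h0 : x 0 ≤ 1) (hb : ∀ n, -1 ≤ b n)
    (hx : ∀ n, x (n + 1) ≤ x n * (1 + b n)) (n : ℕ) :
    x n ≤ Real.exp (∑ k ∈ range n, b k) := by
  induction n with
  | zero => simpa using h0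
  | succ n ih =>
    calc x (n + 1) ≤ x n * (1 + b n) := hx n
      _ ≤ Real.exp (∑ k ∈ range n, b k) * Real.exp (b n) :=
        mul_le_mul ih (by linarith [Real.add_one_le_exp (b n)]) (by linarith [hb n])
          (Real.exp_pos _).le
      _ = Real.exp (∑ k ∈ range (n + 1), b k) := by rw [sum_range_succ, Real.exp_add]

lemma sum_le_div_one_sub_of_le_mul_pow {b : ℕ → ℝ} {B q : ℝ} (hB : 0 ≤ B) (hq0 : 0 ≤ q)
    (hq1 : q < 1) (hb : ∀ k, b k ≤ B * q ^ k) (n : ℕ) :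
    ∑ k ∈ range n, b k ≤ B / (1 - q) :=
  calc ∑ k ∈ range n, b k ≤ B * ∑ k ∈ range n, q ^ k := by
        rw [mul_sum]; exact sum_le_sum fun k _ => hb k
    _ ≤ B * (q ^ 0 / (1 - q)) := by
        rw [← Nat.Ico_zero_eq_range]; gcongr; exact geom_sum_Ico_le_of_lt_one hq0 hq1
    _ = B / (1 - q) := by ring

section Cocycle

variable {M : Type*} {d : ℕ} (f : M → M) (A : M → GL (Fin d) ℝ)

lemma gnorm_cocycle_inv_mul_cocycle_le_exp_sum (u v : M) (n : ℕ) :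
    gnorm ((cocycle f A n u)⁻¹ * cocycle f A n v) ≤
      Real.exp (∑ k ∈ range n, gnorm (cocycle f A k u) * gnorm (cocycle f A k u)⁻¹ *
        gnorm (A (f^[k] u))⁻¹ * ‖(A (f^[k] v) : Matrix (Fin d) (Fin d) ℝ) - A (f^[k] u)‖) := by
  refine le_exp_sum_of_le_mul_one_add (x := fun n => gnorm ((cocycle f A n u)⁻¹ * cocycle f A n v))
    (by simpa [cocycle] using gnorm_one_le) (fun k => neg_one_lt_zero.le.trans ?_)
    (fun k => Units.norm_inv_mul_mul_le (A (f^[k] u)) (A (f^[k] v)) _ _) n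
  positivity

lemma exists_gnorm_inv_le [TopologicalSpace M] [CompactSpace M]
    (hA : Continuous fun x => (A x : Matrix (Fin d) (Fin d) ℝ)) :
    ∃ L, ∀ x, gnorm (A x)⁻¹ ≤ L := by
  have hinv : Continuous fun x => gnorm (A x)⁻¹ := by
    simp only [gnorm, ← Ring.inverse_unit]
    exact (continuous_iff_continuousAt.2 fun x => ContinuousAt.comp
      (f := fun y => (A y : Matrix (Fin d) (Fin d) ℝ))
      (NormedRing.inverse_continuousAt (A x)) hA.continuousAt).norm
  obtain ⟨L, hL⟩ := (isCompact_range hinv).bddAbove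
  exact ⟨L, fun x => hL ⟨x, rfl⟩⟩

theorem gnorm_cocycle_inv_mul_cocycle_le [PseudoMetricSpace M] {K : NNReal}
    (hA : LipschitzWith K fun x => (A x : Matrix (Fin d) (Fin d) ℝ)) {L : ℝ}
    (hL : ∀ x, gnorm (A x)⁻¹ ≤ L) {C₃ θ lam D : ℝ} (hθ : θ < lam) {u v : M}
    (hFB : ∀ k : ℕ, gnorm (cocycle f A k u) * gnorm (cocycle f A k u)⁻¹ ≤ C₃ * Real.exp (θ * k))
    (hD : ∀ k : ℕ, dist (f^[k] u) (f^[k] v) ≤ D * Real.exp (-lam * k)) (n : ℕ) :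
    gnorm ((cocycle f A n u)⁻¹ * cocycle f A n v) ≤
      Real.exp (C₃ * L * K * D / (1 - Real.exp (θ - lam))) := by
  have hstep (k : ℕ) : gnorm (cocycle f A k u) * gnorm (cocycle f A k u)⁻¹ * gnorm (A (f^[k] u))⁻¹ *
      ‖(A (f^[k] v) : Matrix (Fin d) (Fin d) ℝ) - A (f^[k] u)‖ ≤
        C₃ * L * K * D * Real.exp (θ - lam) ^ k := by
    have hdiff : ‖(A (f^[k] v) : Matrix (Fin d) (Fin d) ℝ) - A (f^[k] u)‖ ≤
        K * (D * Real.exp (-lam * k)) := by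
      rw [← dist_eq_norm, dist_comm]
      exact (hA.dist_le_mul _ _).trans (by gcongr; exact hD k)
    have hC₃ : 0 ≤ C₃ * Real.exp (θ * k) :=
      (mul_nonneg (gnorm_nonneg _) (gnorm_nonneg _)).trans (hFB k)
    calc _ ≤ C₃ * Real.exp (θ * k) * L * (K * (D * Real.exp (-lam * k))) :=
          mul_le_mul (mul_le_mul (hFB k) (hL _) (gnorm_nonneg _) hC₃) hdiff (norm_nonneg _)
            (mul_nonneg hC₃ ((gnorm_nonneg _).trans (hL u)))
      _ = C₃ * L * K * D * Real.exp (θ - lam) ^ k := by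
          rw [← Real.exp_nat_mul, show (k : ℝ) * (θ - lam) = θ * k + -lam * k by ring,
            Real.exp_add]
          ring
  have hB : 0 ≤ C₃ * L * K * D := by
    simpa using (mul_nonneg (mul_nonneg (mul_nonneg (gnorm_nonneg _) (gnorm_nonneg _))
      (gnorm_nonneg _)) (norm_nonneg _)).trans (hstep 0)
  exact (gnorm_cocycle_inv_mul_cocycle_le_exp_sum f A u v n).trans <| Real.exp_le_exp.2 <|
    sum_le_div_one_sub_of_le_mul_pow hB (Real.exp_pos _).le (Real.exp_lt_one_iff.2 (by linarith))
      hstep n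

end Cocycle

lemma mem_localStable_comm {M : Type*} [PseudoMetricSpace M] {f : M → M} {ε : ℝ} {x y : M} :
    y ∈ localStable f ε x ↔ x ∈ localStable f ε y := by
  simp only [localStable, Set.mem_ofPred_eq, dist_comm]

lemma IsHyperbolic.dist_iterate_le {M : Type*} [MetricSpace M] {f : M ≃ M} {C₁ lam ε τ : ℝ}
    (hf : IsHyperbolic f C₁ lam ε τ) {x y : M} (hy : y ∈ localStable (⇑f) ε x) (k : ℕ) :
    dist ((⇑f)^[k] x) ((⇑f)^[k] y) ≤ C₁ * ε * Real.exp (-lam * k) := by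
  have hx : x ∈ localStable (⇑f) ε x := fun k => by simpa using hf.eps_pos.le
  calc dist ((⇑f)^[k] x) ((⇑f)^[k] y) ≤ C₁ * Real.exp (-lam * k) * dist x y :=
        hf.stable_contr x x y hx hy k
    _ ≤ C₁ * Real.exp (-lam * k) * ε := by
        have := hf.C₁_pos
        gcongr; simpa using hy 0
    _ = C₁ * ε * Real.exp (-lam * k) := by ring

theorem stmt0_general {M : Type*} [MetricSpace M] [CompactSpace M] {d : ℕ}
    (f : M ≃ M) (C₁ lam ε τ : ℝ) (hf : IsHyperbolic f C₁ lam ε τ)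
    (A : M → GL (Fin d) ℝ)
    (hA : ∃ K : NNReal, LipschitzWith K fun x => (A x : Matrix (Fin d) (Fin d) ℝ))
    (θ : ℝ) (hθ : θ < lam) (hFB : FiberBunched (⇑f) A θ) :
    ∃ C > (0 : ℝ), ∀ x : M, ∀ y ∈ localStable (⇑f) ε x, ∀ z ∈ localStable (⇑f) ε x, ∀ n : ℕ,
      gnorm (cocycle (⇑f) A n y) * gnorm ((cocycle (⇑f) A n z)⁻¹) ≤ C * Real.exp (θ * n) := by
  obtain ⟨C₃, hC₃, hFB⟩ := hFB
  obtain ⟨K, hK⟩ := hA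
  obtain ⟨L, hL⟩ := exists_gnorm_inv_le A hK.continuous
  set K₀ := Real.exp (C₃ * L * K * (C₁ * ε) / (1 - Real.exp (θ - lam)))
  have holonomy {u v : M} (hv : v ∈ localStable (⇑f) ε u) (n : ℕ) :
      gnorm ((cocycle (⇑f) A n u)⁻¹ * cocycle (⇑f) A n v) ≤ K₀ :=
    gnorm_cocycle_inv_mul_cocycle_le _ A hK hL hθ (hFB u) (hf.dist_iterate_le hv) n
  refine ⟨K₀ * K₀ * C₃, by positivity, fun x y hy z hz n => ?_⟩
  calc gnorm (cocycle (⇑f) A n y) * gnorm (cocycle (⇑f) A n z)⁻¹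
      ≤ C₃ * Real.exp (θ * n) * (K₀ * K₀) := by
        refine (gnorm_mul_gnorm_inv_le (cocycle (⇑f) A n x) _ _).trans <| mul_le_mul (hFB x n)
          (mul_le_mul (holonomy hy n) (holonomy (mem_localStable_comm.1 hz) n) (gnorm_nonneg _)
            (Real.exp_pos _).le) (mul_nonneg (gnorm_nonneg _) (gnorm_nonneg _)) (by positivity)
    _ = K₀ * K₀ * C₃ * Real.exp (θ * n) := by ring

/-- uniform bound `‖Aⁿ(y)‖·‖Aⁿ(z)⁻¹‖ ≤ C e^{nθ}` for `y, z` in a common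
local stable set, for a Lipschitz fiber bunched cocycle over a hyperbolic homeomorphism. -/
theorem stmt0 {M : Type*} [MetricSpace M] [CompactSpace M] {d : ℕ}
    (f : M ≃ M) (C₁ lam ε τ : ℝ) (hf : IsHyperbolic f C₁ lam ε τ)
    (A : M → GL (Fin d) ℝ)
    (hA : ∃ K : NNReal, LipschitzWith K fun x => (A x : Matrix (Fin d) (Fin d) ℝ))
    (θ : ℝ) (hθ0 : 0 < θ) (hθ : θ < lam) (hFB : FiberBunched (⇑f) A θ) :
    ∃ C > (0 : ℝ), ∀ x : M, ∀ y ∈ localStable (⇑f) ε x, ∀ z ∈ localStable (⇑f) ε x, ∀ n : ℕ,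
      gnorm (cocycle (⇑f) A n y) * gnorm ((cocycle (⇑f) A n z)⁻¹) ≤ C * Real.exp (θ * n) :=
  stmt0_general f C₁ lam ε τ hf A hA θ hθ hFB
end
end

section
/- Let f be a hyperbolic homeomorphism of a compact metric space M and A: M → GL(d,ℝ) a Lipschitz map satisfying the fiber bunching condition with exponent θ < λ. Then for every x ∈ M and y, z ∈ W^s(x) the limit H^{s,A}_{yz} = lim_{n→∞} Aⁿ(z)⁻¹Aⁿ(y) exists in GL(d,ℝ). -/
open Filter Topology Metric Matrix
open scoped Matrix.Norms.L2Operator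
noncomputable section

/-!
With `Hₙ = Aⁿ(z)⁻¹ Aⁿ(y)` one has `Hₙ₊₁ - Hₙ = Aⁿ(z)⁻¹ A(fⁿz)⁻¹ (A(fⁿy) - A(fⁿz)) Aⁿ(z) Hₙ`, hence
`‖Hₙ₊₁ - Hₙ‖ ≤ aₙ ‖Hₙ‖` where, by fiber bunching, the Lipschitz bound on `A` and the exponential
contraction along stable sets, `aₙ = O(e^{θn} d(fⁿy, fⁿz)) = O(e^{(θ-λ)n})` is summable. This
makes `Hₙ` bounded, then Cauchy. The limit is invertible since the same argument gives a limit
for `Hₙ⁻¹ = Aⁿ(y)⁻¹ Aⁿ(z)`.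
-/
open Asymptotics Real

theorem exists_tendsto_of_norm_sub_le_mul_norm {E : Type*} [NormedAddCommGroup E]
    [CompleteSpace E] {u : ℕ → E} {a : ℕ → ℝ} (ha : Summable a) (ha0 : ∀ n, 0 ≤ a n)
    (hu : ∀ n, ‖u (n + 1) - u n‖ ≤ a n * ‖u n‖) :
    ∃ l, Tendsto u atTop (𝓝 l) := by
  have hgrowth : ∀ n, ‖u n‖ ≤ ‖u 0‖ * exp (∑ k ∈ Finset.range n, a k) := by
    intro n
    induction n with
    | zero => simp
    | succ n ih =>
      calc ‖u (n + 1)‖ ≤ ‖u n‖ + ‖u (n + 1) - u n‖ := norm_le_norm_add_norm_sub' _ _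
        _ ≤ (1 + a n) * ‖u n‖ := by linarith [hu n]
        _ ≤ exp (a n) * (‖u 0‖ * exp (∑ k ∈ Finset.range n, a k)) := by
          gcongr
          linarith [add_one_le_exp (a n)]
        _ = ‖u 0‖ * exp (∑ k ∈ Finset.range (n + 1), a k) := by
          rw [Finset.sum_range_succ, exp_add]; ring
  set B := ‖u 0‖ * exp (∑' k, a k)
  have hB : ∀ n, ‖u n‖ ≤ B := fun n =>
    (hgrowth n).trans <| mul_le_mul_of_nonneg_left
      (exp_le_exp.2 (ha.sum_le_tsum _ fun k _ => ha0 k)) (norm_nonneg _)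
  refine cauchySeq_tendsto_of_complete <|
    cauchySeq_of_dist_le_of_summable (fun n => a n * B) (fun n => ?_) (ha.mul_right B)
  rw [dist_comm, dist_eq_norm]
  exact (hu n).trans (mul_le_mul_of_nonneg_left (hB n) (ha0 n))

theorem Units.exists_val_eq_of_tendsto {ι R : Type*} [Monoid R] [TopologicalSpace R]
    [ContinuousMul R] [T2Space R] {l : Filter ι} [l.NeBot] {u : ι → Rˣ} {a b : R}
    (ha : Tendsto (fun i => (u i : R)) l (𝓝 a)) (hb : Tendsto (fun i => (↑(u i)⁻¹ : R)) l (𝓝 b)) :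
    ∃ U : Rˣ, (U : R) = a :=
  ⟨⟨a, b, tendsto_nhds_unique ((ha.mul hb).congr fun i => (u i).mul_inv) tendsto_const_nhds,
    tendsto_nhds_unique ((hb.mul ha).congr fun i => (u i).inv_mul) tendsto_const_nhds⟩, rfl⟩

theorem Units.exists_bound_norm_inv_of_continuous {M R : Type*} [TopologicalSpace M]
    [CompactSpace M] [NormedRing R] [CompleteSpace R] {A : M → Rˣ}
    (hA : Continuous fun x => (A x : R)) :
    ∃ C, ∀ x, ‖(↑(A x)⁻¹ : R)‖ ≤ C := by
  have hinv : Continuous fun x => (↑(A x)⁻¹ : R) := continuous_iff_continuousAt.2 fun x => by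
    simpa only [Function.comp_def, Ring.inverse_unit] using
      (NormedRing.inverse_continuousAt (A x)).comp (f := fun x => (A x : R)) hA.continuousAt
  obtain ⟨C, hC⟩ := isCompact_univ.exists_bound_of_continuousOn hinv.continuousOn
  exact ⟨C, fun x => hC x (Set.mem_univ x)⟩

theorem tendsto_dist_iterate_of_mem_stableSet {M : Type*} [PseudoMetricSpace M] {f : M → M}
    {x y z : M} (hy : y ∈ stableSet f x) (hz : z ∈ stableSet f x) :
    Tendsto (fun n => dist (f^[n] y) (f^[n] z)) atTop (𝓝 0) :=
  squeeze_zero (fun _ => dist_nonneg) (fun n => dist_triangle_left _ _ (f^[n] x))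
    (by simpa using hy.add hz)

theorem IsHyperbolic.dist_iterate_isBigO {M : Type*} [MetricSpace M] {f : M ≃ M}
    {C₁ lam ε τ : ℝ} (hf : IsHyperbolic f C₁ lam ε τ) {y z : M}
    (hyz : Tendsto (fun n => dist ((⇑f)^[n] y) ((⇑f)^[n] z)) atTop (𝓝 0)) :
    (fun n : ℕ => dist ((⇑f)^[n] y) ((⇑f)^[n] z)) =O[atTop] fun n => exp (-lam * n) := by
  obtain ⟨N, hN⟩ := eventually_atTop.mp (hyz.eventually (ge_mem_nhds hf.eps_pos))
  have hself : (⇑f)^[N] y ∈ localStable (⇑f) ε ((⇑f)^[N] y) := fun j => by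
    simpa using hf.eps_pos.le
  have hloc : (⇑f)^[N] z ∈ localStable (⇑f) ε ((⇑f)^[N] y) := fun j => by
    simpa only [← Function.iterate_add_apply] using hN (j + N) (Nat.le_add_left N j)
  refine IsBigO.of_bound (C₁ * ε * exp (lam * N)) (eventually_atTop.mpr ⟨N, fun n hn => ?_⟩)
  obtain ⟨k, rfl⟩ := Nat.exists_eq_add_of_le' hn
  rw [Real.norm_of_nonneg dist_nonneg, Real.norm_of_nonneg (exp_pos _).le,
    Function.iterate_add_apply, Function.iterate_add_apply]
  calc dist ((⇑f)^[k] ((⇑f)^[N] y)) ((⇑f)^[k] ((⇑f)^[N] z))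
      ≤ C₁ * exp (-lam * k) * dist ((⇑f)^[N] y) ((⇑f)^[N] z) :=
        hf.stable_contr _ _ _ hself hloc k
    _ ≤ C₁ * exp (-lam * k) * ε :=
        mul_le_mul_of_nonneg_left (hN N le_rfl) (mul_pos hf.C₁_pos (exp_pos _)).le
    _ = C₁ * ε * exp (lam * N) * exp (-lam * ↑(k + N)) := by
        rw [mul_assoc (C₁ * ε), ← exp_add]; push_cast; ring_nf

section Cocycle

variable {M G R : Type*}

lemma cocycle_succ [Group G] (f : M → M) (A : M → G) (n : ℕ) (x : M) :
    cocycle f A (n + 1) x = A (f^[n] x) * cocycle f A n x := rfl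

def holonomyApprox [Group G] (f : M → M) (A : M → G) (n : ℕ) (y z : M) : G :=
  (cocycle f A n z)⁻¹ * cocycle f A n y

lemma holonomyApprox_inv [Group G] (f : M → M) (A : M → G) (n : ℕ) (y z : M) :
    (holonomyApprox f A n y z)⁻¹ = holonomyApprox f A n z y := by
  simp [holonomyApprox]

lemma Units.val_inv_mul_mul_sub [Ring R] (a b y z : Rˣ) :
    (↑((a * z)⁻¹ * (b * y)) : R) - ↑(z⁻¹ * y) = ↑z⁻¹ * ↑a⁻¹ * (↑b - ↑a) * ↑z * ↑(z⁻¹ * y) := by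
  simp only [Units.val_mul, _root_.mul_inv_rev, mul_sub, sub_mul, mul_assoc,
    Units.mul_inv_cancel_left, Units.inv_mul_cancel_left]

lemma norm_holonomyApprox_succ_sub_le [NormedRing R] (f : M → M) (A : M → Rˣ) (n : ℕ) (y z : M) :
    ‖(↑(holonomyApprox f A (n + 1) y z) : R) - holonomyApprox f A n y z‖ ≤
      ‖(↑(cocycle f A n z) : R)‖ * ‖(↑(cocycle f A n z)⁻¹ : R)‖ * ‖(↑(A (f^[n] z))⁻¹ : R)‖ *
        ‖(A (f^[n] y) : R) - A (f^[n] z)‖ * ‖(↑(holonomyApprox f A n y z) : R)‖ := by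
  rw [holonomyApprox, holonomyApprox, cocycle_succ, cocycle_succ, Units.val_inv_mul_mul_sub]
  calc _ ≤ _ := norm_mul_le_of_le (norm_mul_le_of_le norm_mul₃_le le_rfl) le_rfl
    _ = _ := by ring

variable [NormedRing R] (f : M → M) (A : M → Rˣ)

theorem exists_tendsto_holonomyApprox [CompleteSpace R] {y z : M}
    (hsum : Summable fun n => ‖(↑(cocycle f A n z) : R)‖ * ‖(↑(cocycle f A n z)⁻¹ : R)‖ *
      ‖(↑(A (f^[n] z))⁻¹ : R)‖ * ‖(A (f^[n] y) : R) - A (f^[n] z)‖) :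
    ∃ H : R, Tendsto (fun n => (↑(holonomyApprox f A n y z) : R)) atTop (𝓝 H) :=
  exists_tendsto_of_norm_sub_le_mul_norm hsum (fun _ => by positivity)
    (norm_holonomyApprox_succ_sub_le f A · y z)

theorem summable_holonomyApprox_increment [PseudoMetricSpace M] {K : NNReal} {Ci C₃ θ lam : ℝ}
    (hθ : θ < lam) (hA : LipschitzWith K fun x => (A x : R))
    (hAinv : ∀ x, ‖(↑(A x)⁻¹ : R)‖ ≤ Ci) {y z : M}
    (hFB : ∀ n : ℕ, ‖(↑(cocycle f A n z) : R)‖ * ‖(↑(cocycle f A n z)⁻¹ : R)‖ ≤ C₃ * exp (θ * n))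
    (hyz : (fun n : ℕ => dist (f^[n] y) (f^[n] z)) =O[atTop] fun n => exp (-lam * n)) :
    Summable fun n => ‖(↑(cocycle f A n z) : R)‖ * ‖(↑(cocycle f A n z)⁻¹ : R)‖ *
      ‖(↑(A (f^[n] z))⁻¹ : R)‖ * ‖(A (f^[n] y) : R) - A (f^[n] z)‖ := by
  have hcond : (fun n : ℕ => ‖(↑(cocycle f A n z) : R)‖ * ‖(↑(cocycle f A n z)⁻¹ : R)‖)
      =O[atTop] fun n => exp (θ * n) := isBigO_of_le' (c := C₃) _ fun n => by
    rw [Real.norm_of_nonneg (by positivity), Real.norm_of_nonneg (exp_pos _).le]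
    exact hFB n
  have hinv : (fun n => ‖(↑(A (f^[n] z))⁻¹ : R)‖) =O[atTop] fun _ => (1 : ℝ) :=
    isBigO_of_le' (c := Ci) _ fun n => by simpa using hAinv _
  have hlip : (fun n => ‖(A (f^[n] y) : R) - A (f^[n] z)‖)
      =O[atTop] fun n => dist (f^[n] y) (f^[n] z) := isBigO_of_le' (c := K) _ fun n => by
    rw [norm_norm, Real.norm_of_nonneg dist_nonneg, ← dist_eq_norm]
    exact hA.dist_le_mul _ _
  refine summable_of_isBigO_nat (summable_exp_nat_mul_iff.2 (sub_neg.2 hθ))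
    (((hcond.mul hinv).mul (hlip.trans hyz)).congr_right fun n => ?_)
  rw [mul_one, ← exp_add]
  ring_nf

theorem exists_units_tendsto_holonomyApprox [PseudoMetricSpace M] [CompleteSpace R]
    {K : NNReal} {Ci C₃ θ lam : ℝ} (hθ : θ < lam) (hA : LipschitzWith K fun x => (A x : R))
    (hAinv : ∀ x, ‖(↑(A x)⁻¹ : R)‖ ≤ Ci)
    (hFB : ∀ x n, ‖(↑(cocycle f A n x) : R)‖ * ‖(↑(cocycle f A n x)⁻¹ : R)‖ ≤ C₃ * exp (θ * n))
    {y z : M} (hyz : (fun n : ℕ => dist (f^[n] y) (f^[n] z)) =O[atTop] fun n => exp (-lam * n)) :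
    ∃ H : Rˣ, Tendsto (fun n => (↑(holonomyApprox f A n y z) : R)) atTop (𝓝 H) := by
  have hzy : (fun n : ℕ => dist (f^[n] z) (f^[n] y)) =O[atTop] fun n => exp (-lam * n) := by
    simpa only [dist_comm] using hyz
  obtain ⟨H, hH⟩ := exists_tendsto_holonomyApprox f A
    (summable_holonomyApprox_increment f A hθ hA hAinv (hFB z) hyz)
  obtain ⟨H', hH'⟩ := exists_tendsto_holonomyApprox f A
    (summable_holonomyApprox_increment f A hθ hA hAinv (hFB y) hzy)
  obtain ⟨U, rfl⟩ := Units.exists_val_eq_of_tendsto hH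
    (hH'.congr fun n => by rw [holonomyApprox_inv])
  exact ⟨U, hH⟩

end Cocycle

theorem stmt1_general {M : Type*} [MetricSpace M] [CompactSpace M] {d : ℕ}
    (f : M ≃ M) (C₁ lam ε τ : ℝ) (hf : IsHyperbolic f C₁ lam ε τ)
    (A : M → GL (Fin d) ℝ)
    (hA : ∃ K : NNReal, LipschitzWith K fun x => (A x : Matrix (Fin d) (Fin d) ℝ))
    (θ : ℝ) (hθ : θ < lam) (hFB : FiberBunched (⇑f) A θ) :
    ∀ x : M, ∀ y ∈ stableSet (⇑f) x, ∀ z ∈ stableSet (⇑f) x,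
      ∃ H : GL (Fin d) ℝ,
        Tendsto (fun n : ℕ =>
            ((((cocycle (⇑f) A n z)⁻¹ * cocycle (⇑f) A n y : GL (Fin d) ℝ)) :
              Matrix (Fin d) (Fin d) ℝ))
          atTop (𝓝 (H : Matrix (Fin d) (Fin d) ℝ)) := by
  intro x y hy z hz
  obtain ⟨K, hK⟩ := hA
  obtain ⟨C₃, -, hC₃⟩ := hFB
  obtain ⟨Ci, hCi⟩ := Units.exists_bound_norm_inv_of_continuous hK.continuous
  exact exists_units_tendsto_holonomyApprox (⇑f) A hθ hK hCi hC₃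
    (hf.dist_iterate_isBigO (tendsto_dist_iterate_of_mem_stableSet hy hz))

/-- existence of stable holonomies: for `y, z` in the stable set of `x`,
the limit `H^{s,A}_{yz} = lim_n Aⁿ(z)⁻¹ Aⁿ(y)` exists in `GL(d,ℝ)`. -/
theorem stmt1 {M : Type*} [MetricSpace M] [CompactSpace M] {d : ℕ}
    (f : M ≃ M) (C₁ lam ε τ : ℝ) (hf : IsHyperbolic f C₁ lam ε τ)
    (A : M → GL (Fin d) ℝ)
    (hA : ∃ K : NNReal, LipschitzWith K fun x => (A x : Matrix (Fin d) (Fin d) ℝ))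
    (θ : ℝ) (hθ0 : 0 < θ) (hθ : θ < lam) (hFB : FiberBunched (⇑f) A θ) :
    ∀ x : M, ∀ y ∈ stableSet (⇑f) x, ∀ z ∈ stableSet (⇑f) x,
      ∃ H : GL (Fin d) ℝ,
        Tendsto (fun n : ℕ =>
            ((((cocycle (⇑f) A n z)⁻¹ * cocycle (⇑f) A n y : GL (Fin d) ℝ)) :
              Matrix (Fin d) (Fin d) ℝ))
          atTop (𝓝 (H : Matrix (Fin d) (Fin d) ℝ)) :=
  stmt1_general f C₁ lam ε τ hf A hA θ hθ hFB
end
end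

section
/- Let f: M → M be a hyperbolic homeomorphism with fixed point x, and let A, B be Lipschitz fiber bunched GL(d,ℝ)-valued cocycles over f with Aⁿ(p) = Bⁿ(p) for every periodic point p of period n. Define P(y) = H^{s,A}_{xy} (H^{s,B}_{xy})⁻¹ for y ∈ W^s(x) ∩ W^u(x). Then P satisfies the cohomology equation P(f(y)) = A(y) P(y) B(y)⁻¹ for all y ∈ W^s(x) ∩ W^u(x). -/
open Filter Topology Metric Matrix
open scoped Matrix.Norms.L2Operator
noncomputable section

/-! The equivariance `H (f y) (f z) = A z * H y z * (A y)⁻¹` of the stable holonomy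
`H y z = lim (Aⁿ z)⁻¹ Aⁿ y` follows by comparing the `n`-th term of the limit for `(f y, f z)` with
the `(n+1)`-st for `(y, z)`. At the fixed point `x` the periodic data give `A x = B x`, so in
`P y = H^A x y * (H^B x y)⁻¹` the conjugating factors `(A x)⁻¹` and `B x` cancel. -/

section Cocycle

variable {M G : Type*} [Group G] (f : M → M) (A : M → G)

theorem cocycle_one (y : M) : cocycle f A 1 y = A y :=
  mul_one _

theorem cocycle_succ_eq_mul (n : ℕ) (y : M) :
    cocycle f A (n + 1) y = cocycle f A n (f y) * A y := by
  induction n with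
  | zero => simp only [cocycle, Function.iterate_zero, id, one_mul, mul_one]
  | succ n ih =>
    change A (f^[n + 1] y) * cocycle f A (n + 1) y = A (f^[n] (f y)) * cocycle f A n (f y) * A y
    rw [ih, Function.iterate_succ_apply, mul_assoc]

end Cocycle

section StableSet

variable {M : Type*} [PseudoMetricSpace M]

theorem mem_stableSet_self (f : M → M) (x : M) : x ∈ stableSet f x := by
  simpa only [stableSet, Set.mem_ofPred_eq, dist_self] using tendsto_const_nhds

theorem map_mem_stableSet {f : M → M} {x y : M} (hy : y ∈ stableSet f x) :
    f y ∈ stableSet f (f x) :=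
  hy.comp (tendsto_add_atTop_nat 1)

end StableSet

theorem holonomy_map_eq {M R : Type*} [Monoid R] [TopologicalSpace R] [ContinuousMul R]
    [T2Space R] (f : M → M) (A : M → Rˣ) {y z : M} {H H' : Rˣ}
    (hH : Tendsto (fun n : ℕ => (((cocycle f A n z)⁻¹ * cocycle f A n y : Rˣ) : R)) atTop (𝓝 H))
    (hH' : Tendsto (fun n : ℕ => (((cocycle f A n (f z))⁻¹ * cocycle f A n (f y) : Rˣ) : R))
      atTop (𝓝 H')) :
    H' = A z * H * (A y)⁻¹ := by
  have hshift : ∀ n : ℕ, (cocycle f A n (f z))⁻¹ * cocycle f A n (f y)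
      = A z * ((cocycle f A (n + 1) z)⁻¹ * cocycle f A (n + 1) y) * (A y)⁻¹ := by
    intro n
    rw [cocycle_succ_eq_mul, cocycle_succ_eq_mul]
    group
  have hlim : Tendsto (fun n : ℕ => (((cocycle f A n (f z))⁻¹ * cocycle f A n (f y) : Rˣ) : R))
      atTop (𝓝 ((A z * H * (A y)⁻¹ : Rˣ) : R)) := by
    simp only [hshift, Units.val_mul]
    exact ((hH.comp (tendsto_add_atTop_nat 1)).const_mul _).mul_const _
  exact Units.ext (tendsto_nhds_unique hH' hlim)

theorem stmt7_general {M : Type*} [MetricSpace M] {d : ℕ}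
    (f : M ≃ M)
    (x : M) (hx : f x = x)
    (A B : M → GL (Fin d) ℝ)
    (hper : ∀ (p : M) (n : ℕ), 0 < n → (⇑f)^[n] p = p →
      cocycle (⇑f) A n p = cocycle (⇑f) B n p)
    (HA HB : M → M → GL (Fin d) ℝ)
    (hHA : ∀ w : M, ∀ y ∈ stableSet (⇑f) w, ∀ z ∈ stableSet (⇑f) w,
      Tendsto (fun n : ℕ =>
          ((((cocycle (⇑f) A n z)⁻¹ * cocycle (⇑f) A n y : GL (Fin d) ℝ)) :
            Matrix (Fin d) (Fin d) ℝ))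
        atTop (𝓝 (HA y z : Matrix (Fin d) (Fin d) ℝ)))
    (hHB : ∀ w : M, ∀ y ∈ stableSet (⇑f) w, ∀ z ∈ stableSet (⇑f) w,
      Tendsto (fun n : ℕ =>
          ((((cocycle (⇑f) B n z)⁻¹ * cocycle (⇑f) B n y : GL (Fin d) ℝ)) :
            Matrix (Fin d) (Fin d) ℝ))
        atTop (𝓝 (HB y z : Matrix (Fin d) (Fin d) ℝ))) :
    ∀ y ∈ stableSet (⇑f) x ∩ stableSet (⇑f.symm) x,
      HA x (f y) * (HB x (f y))⁻¹ = A y * (HA x y * (HB x y)⁻¹) * (B y)⁻¹ := by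
  rintro y ⟨hy, -⟩
  have hxx : x ∈ stableSet (⇑f) x := mem_stableSet_self (⇑f) x
  have hfy : f y ∈ stableSet (⇑f) x := hx ▸ map_mem_stableSet hy
  have hAB : A x = B x := by
    simpa only [cocycle_one] using hper x 1 one_pos (by simp [hx])
  have hHA_map : HA x (f y) = A y * HA x y * (A x)⁻¹ :=
    holonomy_map_eq (⇑f) A (hHA x x hxx y hy) (by rw [hx]; exact hHA x x hxx (f y) hfy)
  have hHB_map : HB x (f y) = B y * HB x y * (B x)⁻¹ :=
    holonomy_map_eq (⇑f) B (hHB x x hxx y hy) (by rw [hx]; exact hHB x x hxx (f y) hfy)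
  rw [hHA_map, hHB_map, hAB]
  group

/-- with `x` a fixed point of `f` and `P(y) = H^{s,A}_{xy}(H^{s,B}_{xy})⁻¹` for
`y ∈ W(x) = W^s(x) ∩ W^u(x)`, the map `P` satisfies `P(f(y)) = A(y) P(y) B(y)⁻¹` on `W(x)`. -/
theorem stmt7 {M : Type*} [MetricSpace M] [CompactSpace M] {d : ℕ}
    (f : M ≃ M) (C₁ lam ε τ : ℝ) (hf : IsHyperbolic f C₁ lam ε τ)
    (x : M) (hx : f x = x)
    (A B : M → GL (Fin d) ℝ)
    (hA : ∃ K : NNReal, LipschitzWith K fun x => (A x : Matrix (Fin d) (Fin d) ℝ))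
    (hB : ∃ K : NNReal, LipschitzWith K fun x => (B x : Matrix (Fin d) (Fin d) ℝ))
    (θ : ℝ) (hθ0 : 0 < θ) (hθ : θ < lam)
    (hFA : FiberBunched (⇑f) A θ) (hFB : FiberBunched (⇑f) B θ)
    (hper : ∀ (p : M) (n : ℕ), 0 < n → (⇑f)^[n] p = p →
      cocycle (⇑f) A n p = cocycle (⇑f) B n p)
    (HA HB : M → M → GL (Fin d) ℝ)
    (hHA : ∀ w : M, ∀ y ∈ stableSet (⇑f) w, ∀ z ∈ stableSet (⇑f) w,
      Tendsto (fun n : ℕ =>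
          ((((cocycle (⇑f) A n z)⁻¹ * cocycle (⇑f) A n y : GL (Fin d) ℝ)) :
            Matrix (Fin d) (Fin d) ℝ))
        atTop (𝓝 (HA y z : Matrix (Fin d) (Fin d) ℝ)))
    (hHB : ∀ w : M, ∀ y ∈ stableSet (⇑f) w, ∀ z ∈ stableSet (⇑f) w,
      Tendsto (fun n : ℕ =>
          ((((cocycle (⇑f) B n z)⁻¹ * cocycle (⇑f) B n y : GL (Fin d) ℝ)) :
            Matrix (Fin d) (Fin d) ℝ))
        atTop (𝓝 (HB y z : Matrix (Fin d) (Fin d) ℝ))) :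
    ∀ y ∈ stableSet (⇑f) x ∩ stableSet (⇑f.symm) x,
      HA x (f y) * (HB x (f y))⁻¹ = A y * (HA x y * (HB x y)⁻¹) * (B y)⁻¹ :=
  stmt7_general f x hx A B hper HA HB hHA hHB
end
end

section
/- Let f be a hyperbolic homeomorphism with fixed point x, and A, B Lipschitz fiber bunched cocycles with equal periodic data. Then the map P(y) = H^{s,A}_{xy} H^{s,B}_{yx}, defined on W(x) = W^s(x) ∩ W^u(x), is Lipschitz continuous on W(x): there is a constant C > 0 such that ‖P(y) − P(z)‖ ≤ C d(y,z) whenever y, z ∈ W(x) with d(y,z) < τ. -/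
open Filter Topology Metric Matrix
open scoped Matrix.Norms.L2Operator
noncomputable section

/-!
For `y, z ∈ W(x)` close together, the bracket `w = [y, z]` is again in `W(x)`, and the holonomy
composition identities give `H^{s,A}_{yw} P(y) H^{s,B}_{wy} = H^{u,A}_{zw} P(z) H^{u,B}_{wz}`. All
four outer factors are within `O(d(y, z))` of the identity, so
`‖P(y) − P(z)‖ ≤ c (‖P(y)‖ + ‖P(z)‖) d(y, z)`. This relative estimate alone already bounds `P` on
the totally bounded set `W(x)`: covering it by finitely many balls of radius `δ` with `c δ ≤ 1/2`
gives `‖P(y)‖ ≤ 3 ‖P(p)‖` for the nearest centre `p`. With `P` bounded, the relative estimate is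
the Lipschitz estimate.
-/

def IsHolonomyCocycle {M G : Type*} [Group G] (W : M → Set M) (H : M → M → G) : Prop :=
  ∀ w : M, ∀ y ∈ W w, ∀ z ∈ W w, H y z = H w z * H y w

def IsNearIdentity {M : Type*} [PseudoMetricSpace M] {d : ℕ} (W : M → Set M)
    (H : M → M → GL (Fin d) ℝ) (C : ℝ) : Prop :=
  ∀ w : M, ∀ y ∈ W w, ∀ z ∈ W w, ‖(H y z : Matrix (Fin d) (Fin d) ℝ) - 1‖ ≤ C * dist y z

def holonomyProduct {M : Type*} {d : ℕ} (HA HB : M → M → GL (Fin d) ℝ) (x y : M) :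
    Matrix (Fin d) (Fin d) ℝ :=
  ↑(HA x y * HB y x)

section StableSets

variable {M : Type*} [PseudoMetricSpace M] {f : M → M} {x y z : M}

theorem mem_stableSet_comm : y ∈ stableSet f x ↔ x ∈ stableSet f y := by
  simp only [stableSet, Set.mem_ofPred_eq, dist_comm]

theorem mem_stableSet_trans (hy : y ∈ stableSet f x) (hz : z ∈ stableSet f y) :
    z ∈ stableSet f x := by
  refine squeeze_zero (fun _ => dist_nonneg) (fun n => dist_triangle _ (f^[n] y) _) ?_
  simpa using hy.add hz

theorem mem_localStable_self {ε : ℝ} (hε : 0 ≤ ε) : x ∈ localStable f ε x :=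
  fun n => by simpa using hε

theorem mem_stableSet_of_contraction {ε C lam : ℝ} (hlam : 0 < lam) (hε : 0 ≤ ε)
    (hcontr : ∀ x y z, y ∈ localStable f ε x → z ∈ localStable f ε x →
      ∀ n : ℕ, dist (f^[n] y) (f^[n] z) ≤ C * Real.exp (-lam * n) * dist y z)
    (hz : z ∈ localStable f ε y) : z ∈ stableSet f y := by
  have hexp : Tendsto (fun n : ℕ => Real.exp (-lam * n)) atTop (𝓝 0) :=
    Real.tendsto_exp_atBot.comp
      (tendsto_natCast_atTop_atTop.const_mul_atTop_of_neg (neg_lt_zero.2 hlam))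
  refine squeeze_zero (fun _ => dist_nonneg)
    (hcontr y y z (mem_localStable_self hε) hz) ?_
  simpa using (hexp.const_mul C).mul_const (dist y z)

theorem holonomy_conj_eq {G : Type*} [Group G] {g : M → M} {w : M}
    {HsA HsB HuA HuB : M → M → G}
    (hcsA : IsHolonomyCocycle (stableSet f) HsA) (hcsB : IsHolonomyCocycle (stableSet f) HsB)
    (hcuA : IsHolonomyCocycle (stableSet g) HuA) (hcuB : IsHolonomyCocycle (stableSet g) HuB)
    (hagree : ∀ y ∈ stableSet f x ∩ stableSet g x, HsA x y * HsB y x = HuA x y * HuB y x)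
    (hy : y ∈ stableSet f x) (hz : z ∈ stableSet f x ∩ stableSet g x)
    (hwy : w ∈ stableSet f y) (hwz : w ∈ stableSet g z) :
    HsA y w * (HsA x y * HsB y x) * HsB w y = HuA z w * (HsA x z * HsB z x) * HuB w z := by
  have hxy : x ∈ stableSet f y := mem_stableSet_comm.1 hy
  have hxz : x ∈ stableSet g z := mem_stableSet_comm.1 hz.2
  have hw : w ∈ stableSet f x ∩ stableSet g x :=
    ⟨mem_stableSet_trans hy hwy, mem_stableSet_trans hz.2 hwz⟩
  calc HsA y w * (HsA x y * HsB y x) * HsB w y = HsA x w * HsB w x := by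
        rw [hcsA y x hxy w hwy, hcsB y w hwy x hxy]; group
    _ = HuA x w * HuB w x := hagree w hw
    _ = HuA z w * (HuA x z * HuB z x) * HuB w z := by
        rw [hcuA z x hxz w hwz, hcuB z w hwz x hxz]; group
    _ = HuA z w * (HsA x z * HsB z x) * HuB w z := by rw [hagree z hz]

end StableSets

namespace IsHyperbolic

variable {M : Type*} [MetricSpace M] {f : M ≃ M} {C₁ lam ε τ : ℝ} {y z : M}

theorem mem_stableSet (hf : IsHyperbolic f C₁ lam ε τ) (hz : z ∈ localStable (⇑f) ε y) :
    z ∈ stableSet (⇑f) y :=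
  mem_stableSet_of_contraction hf.lam_pos hf.eps_pos.le hf.stable_contr hz

theorem mem_unstableSet (hf : IsHyperbolic f C₁ lam ε τ)
    (hz : z ∈ localStable (⇑f.symm) ε y) : z ∈ stableSet (⇑f.symm) y :=
  mem_stableSet_of_contraction hf.lam_pos hf.eps_pos.le hf.unstable_contr hz

end IsHyperbolic

section NormedRing

variable {R : Type*} [NormedRing R]

theorem norm_mul_mul_sub_self_le (a p b : R) :
    ‖a * p * b - p‖ ≤ ‖p‖ * (‖a - 1‖ + ‖b - 1‖ + ‖a - 1‖ * ‖b - 1‖) := by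
  have hsplit : a * p * b - p = (a - 1) * p + p * (b - 1) + (a - 1) * p * (b - 1) := by
    noncomm_ring
  calc ‖a * p * b - p‖
      ≤ ‖a - 1‖ * ‖p‖ + ‖p‖ * ‖b - 1‖ + ‖a - 1‖ * ‖p‖ * ‖b - 1‖ := by
        rw [hsplit]
        refine (norm_add₃_le).trans (add_le_add_three (norm_mul_le _ _) (norm_mul_le _ _) ?_)
        exact (norm_mul_le _ _).trans (by gcongr; exact norm_mul_le _ _)
    _ = ‖p‖ * (‖a - 1‖ + ‖b - 1‖ + ‖a - 1‖ * ‖b - 1‖) := by ring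

theorem norm_sub_le_of_mul_mul_eq {a p b a' q b' : R} {η : ℝ} (h : a * p * b = a' * q * b')
    (ha : ‖a - 1‖ ≤ η) (hb : ‖b - 1‖ ≤ η) (ha' : ‖a' - 1‖ ≤ η) (hb' : ‖b' - 1‖ ≤ η) :
    ‖p - q‖ ≤ η * (2 + η) * (‖p‖ + ‖q‖) := by
  have hη : 0 ≤ η := (norm_nonneg _).trans ha
  have bound {u v w : R} (hu : ‖u - 1‖ ≤ η) (hw : ‖w - 1‖ ≤ η) :
      ‖u * v * w - v‖ ≤ η * (2 + η) * ‖v‖ := by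
    refine (norm_mul_mul_sub_self_le u v w).trans ?_
    have huw : ‖u - 1‖ * ‖w - 1‖ ≤ η * η := mul_le_mul hu hw (norm_nonneg _) hη
    nlinarith [norm_nonneg v]
  have hpq : p - q = (a' * q * b' - q) - (a * p * b - p) := by rw [h]; abel
  calc ‖p - q‖ ≤ ‖a' * q * b' - q‖ + ‖a * p * b - p‖ := hpq ▸ norm_sub_le _ _
    _ ≤ η * (2 + η) * ‖q‖ + η * (2 + η) * ‖p‖ := add_le_add (bound ha' hb') (bound ha hb)
    _ = η * (2 + η) * (‖p‖ + ‖q‖) := by ring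

end NormedRing

theorem norm_holonomyProduct_sub_le {M : Type*} [MetricSpace M] {d : ℕ} {f : M ≃ M}
    {C₁ lam ε τ C₄ : ℝ} (hf : IsHyperbolic f C₁ lam ε τ) {x y z w : M}
    {HsA HsB HuA HuB : M → M → GL (Fin d) ℝ}
    (hcsA : IsHolonomyCocycle (stableSet ⇑f) HsA) (hcsB : IsHolonomyCocycle (stableSet ⇑f) HsB)
    (hcuA : IsHolonomyCocycle (stableSet ⇑f.symm) HuA)
    (hcuB : IsHolonomyCocycle (stableSet ⇑f.symm) HuB) (hC₄ : 0 ≤ C₄)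
    (hbsA : IsNearIdentity (localStable ⇑f ε) HsA C₄)
    (hbsB : IsNearIdentity (localStable ⇑f ε) HsB C₄)
    (hbuA : IsNearIdentity (localStable ⇑f.symm ε) HuA C₄)
    (hbuB : IsNearIdentity (localStable ⇑f.symm ε) HuB C₄)
    (hagree : ∀ y ∈ stableSet ⇑f x ∩ stableSet ⇑f.symm x,
      HsA x y * HsB y x = HuA x y * HuB y x)
    (hy : y ∈ stableSet ⇑f x) (hz : z ∈ stableSet ⇑f x ∩ stableSet ⇑f.symm x)
    (hws : w ∈ localStable ⇑f ε y) (hwu : w ∈ localStable ⇑f.symm ε z) :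
    ‖holonomyProduct HsA HsB x y - holonomyProduct HsA HsB x z‖ ≤
      C₄ * (dist y w + dist w z) * (2 + C₄ * (dist y w + dist w z)) *
        (‖holonomyProduct HsA HsB x y‖ + ‖holonomyProduct HsA HsB x z‖) := by
  have hε := hf.eps_pos.le
  have hconj := holonomy_conj_eq hcsA hcsB hcuA hcuB hagree hy hz
    (hf.mem_stableSet hws) (hf.mem_unstableSet hwu)
  have hyw : C₄ * dist y w ≤ C₄ * (dist y w + dist w z) := by
    gcongr; exact le_add_of_nonneg_right dist_nonneg
  have hwz : C₄ * dist w z ≤ C₄ * (dist y w + dist w z) := by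
    gcongr; exact le_add_of_nonneg_left dist_nonneg
  refine norm_sub_le_of_mul_mul_eq
    (by simpa only [holonomyProduct, Units.val_mul] using congrArg Units.val hconj)
    ((hbsA y y (mem_localStable_self hε) w hws).trans hyw)
    ((hbsB y w hws y (mem_localStable_self hε)).trans (dist_comm w y ▸ hyw))
    ((hbuA z z (mem_localStable_self hε) w hwu).trans (dist_comm w z ▸ hwz))
    ((hbuB z w hwu z (mem_localStable_self hε)).trans hwz)

section Bound

variable {X E : Type*} [PseudoMetricSpace X] [SeminormedAddCommGroup E] {S : Set X} {g : X → E}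
  {c τ : ℝ}

theorem TotallyBounded.exists_norm_le_of_norm_sub_le (hS : TotallyBounded S) (hc : 0 ≤ c)
    (hτ : 0 < τ)
    (h : ∀ y ∈ S, ∀ z ∈ S, dist y z < τ → ‖g y - g z‖ ≤ c * (‖g y‖ + ‖g z‖) * dist y z) :
    ∃ K, 0 ≤ K ∧ ∀ y ∈ S, ‖g y‖ ≤ K := by
  obtain ⟨δ₀, hδ₀, hcδ₀⟩ := exists_pos_mul_lt (by norm_num : (0 : ℝ) < 1 / 2) c
  set δ := min δ₀ τ
  have hcδ : c * δ ≤ 1 / 2 := (mul_le_mul_of_nonneg_left (min_le_left _ _) hc).trans hcδ₀.le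
  obtain ⟨t, htS, ht, hcover⟩ :=
    Metric.finite_approx_of_totallyBounded hS δ (lt_min hδ₀ hτ)
  obtain ⟨B, hB⟩ := (ht.image fun p => ‖g p‖).bddAbove
  refine ⟨3 * max B 0, by positivity, fun y hy => ?_⟩
  obtain ⟨p, hpt, hyp⟩ := Set.mem_iUnion₂.1 (hcover hy)
  have hyp : dist y p < δ := hyp
  have hpB : ‖g p‖ ≤ max B 0 := (hB ⟨p, hpt, rfl⟩).trans (le_max_left _ _)
  have hclose : ‖g y - g p‖ ≤ (‖g y‖ + ‖g p‖) / 2 :=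
    calc ‖g y - g p‖ ≤ c * (‖g y‖ + ‖g p‖) * dist y p :=
          h y hy p (htS hpt) (hyp.trans_le (min_le_right _ _))
      _ ≤ c * (‖g y‖ + ‖g p‖) * δ := by gcongr
      _ = c * δ * (‖g y‖ + ‖g p‖) := by ring
      _ ≤ 1 / 2 * (‖g y‖ + ‖g p‖) := by gcongr
      _ = (‖g y‖ + ‖g p‖) / 2 := by ring
  linarith [norm_le_insert' (g y) (g p)]

theorem TotallyBounded.exists_norm_sub_le_mul_dist (hS : TotallyBounded S) (hc : 0 ≤ c)
    (hτ : 0 < τ)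
    (h : ∀ y ∈ S, ∀ z ∈ S, dist y z < τ → ‖g y - g z‖ ≤ c * (‖g y‖ + ‖g z‖) * dist y z) :
    ∃ C > 0, ∀ y ∈ S, ∀ z ∈ S, dist y z < τ → ‖g y - g z‖ ≤ C * dist y z := by
  obtain ⟨K, hK, hbound⟩ := hS.exists_norm_le_of_norm_sub_le hc hτ h
  refine ⟨c * (2 * K) + 1, by positivity, fun y hy z hz hyz => ?_⟩
  calc ‖g y - g z‖ ≤ c * (‖g y‖ + ‖g z‖) * dist y z := h y hy z hz hyz
    _ ≤ c * (2 * K) * dist y z := by gcongr; linarith [hbound y hy, hbound z hz]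
    _ ≤ (c * (2 * K) + 1) * dist y z := by gcongr; linarith

end Bound

theorem stmt11_general {M : Type*} [MetricSpace M] [CompactSpace M] {d : ℕ}
    (f : M ≃ M) (C₁ lam ε τ : ℝ) (hf : IsHyperbolic f C₁ lam ε τ)
    (x : M)
    (HsA HsB HuA HuB : M → M → GL (Fin d) ℝ)
    -- composition identities for the holonomies
    (hcsA : ∀ w : M, ∀ y ∈ stableSet (⇑f) w, ∀ z ∈ stableSet (⇑f) w, HsA y z = HsA w z * HsA y w)
    (hcsB : ∀ w : M, ∀ y ∈ stableSet (⇑f) w, ∀ z ∈ stableSet (⇑f) w, HsB y z = HsB w z * HsB y w)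
    (hcuA : ∀ w : M, ∀ y ∈ stableSet (⇑f.symm) w, ∀ z ∈ stableSet (⇑f.symm) w,
      HuA y z = HuA w z * HuA y w)
    (hcuB : ∀ w : M, ∀ y ∈ stableSet (⇑f.symm) w, ∀ z ∈ stableSet (⇑f.symm) w,
      HuB y z = HuB w z * HuB y w)
    -- the holonomies are close to the identity at nearby points
    (C₄ : ℝ) (hC₄ : 0 < C₄)
    (hbsA : ∀ w : M, ∀ y ∈ localStable (⇑f) ε w, ∀ z ∈ localStable (⇑f) ε w,
      ‖(HsA y z : Matrix (Fin d) (Fin d) ℝ) - 1‖ ≤ C₄ * dist y z)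
    (hbsB : ∀ w : M, ∀ y ∈ localStable (⇑f) ε w, ∀ z ∈ localStable (⇑f) ε w,
      ‖(HsB y z : Matrix (Fin d) (Fin d) ℝ) - 1‖ ≤ C₄ * dist y z)
    (hbuA : ∀ w : M, ∀ y ∈ localStable (⇑f.symm) ε w, ∀ z ∈ localStable (⇑f.symm) ε w,
      ‖(HuA y z : Matrix (Fin d) (Fin d) ℝ) - 1‖ ≤ C₄ * dist y z)
    (hbuB : ∀ w : M, ∀ y ∈ localStable (⇑f.symm) ε w, ∀ z ∈ localStable (⇑f.symm) ε w,
      ‖(HuB y z : Matrix (Fin d) (Fin d) ℝ) - 1‖ ≤ C₄ * dist y z)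
    -- the stable and unstable expressions for P agree on W(x)
    (hagree : ∀ y ∈ stableSet (⇑f) x ∩ stableSet (⇑f.symm) x,
      HsA x y * HsB y x = HuA x y * HuB y x)
    -- quantitative local product structure
    (br : M → M → M) (C₁₄ : ℝ) (hC₁₄ : 0 < C₁₄)
    (hbr : ∀ y z : M, dist y z < τ →
      br y z ∈ localStable (⇑f) ε y ∩ localStable (⇑f.symm) ε z ∧
      dist y (br y z) + dist (br y z) z ≤ C₁₄ * dist y z) :
    ∃ C > (0 : ℝ), ∀ y ∈ stableSet (⇑f) x ∩ stableSet (⇑f.symm) x,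
      ∀ z ∈ stableSet (⇑f) x ∩ stableSet (⇑f.symm) x, dist y z < τ →
        ‖((HsA x y * HsB y x : GL (Fin d) ℝ) : Matrix (Fin d) (Fin d) ℝ) -
          ((HsA x z * HsB z x : GL (Fin d) ℝ) : Matrix (Fin d) (Fin d) ℝ)‖ ≤ C * dist y z := by
  have hτ := hf.tau_pos
  have hL : 0 ≤ C₄ * C₁₄ := by positivity
  refine (isCompact_univ.totallyBounded.subset (Set.subset_univ _)).exists_norm_sub_le_mul_dist
    (g := holonomyProduct HsA HsB x) (c := C₄ * C₁₄ * (2 + C₄ * C₁₄ * τ)) (by positivity) hτ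
    fun y hy z hz hyz => ?_
  obtain ⟨⟨hws, hwu⟩, hwd⟩ := hbr y z hyz
  have hη : C₄ * (dist y (br y z) + dist (br y z) z) ≤ C₄ * C₁₄ * dist y z := by
    rw [mul_assoc]; gcongr
  have hητ : C₄ * C₁₄ * dist y z ≤ C₄ * C₁₄ * τ := by gcongr
  calc _ ≤ _ := norm_holonomyProduct_sub_le hf hcsA hcsB hcuA hcuB hC₄.le hbsA hbsB hbuA hbuB
          hagree hy.1 hz hws hwu
    _ ≤ C₄ * C₁₄ * dist y z * (2 + C₄ * C₁₄ * τ) *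
          (‖holonomyProduct HsA HsB x y‖ + ‖holonomyProduct HsA HsB x z‖) := by
        gcongr ?_ * ?_ * _
        linarith
    _ = _ := by ring

/-- the map `P(y) = H^{s,A}_{xy} H^{s,B}_{yx}` is Lipschitz on
`W(x) = W^s(x) ∩ W^u(x)`: `‖P(y) − P(z)‖ ≤ C d(y,z)` for `y, z ∈ W(x)` with `d(y,z) < τ`. -/
theorem stmt11 {M : Type*} [MetricSpace M] [CompactSpace M] {d : ℕ}
    (f : M ≃ M) (C₁ lam ε τ : ℝ) (hf : IsHyperbolic f C₁ lam ε τ)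
    (x : M) (hx : f x = x)
    (A B : M → GL (Fin d) ℝ)
    (HsA HsB HuA HuB : M → M → GL (Fin d) ℝ)
    -- composition identities for the holonomies
    (hcsA : ∀ w : M, ∀ y ∈ stableSet (⇑f) w, ∀ z ∈ stableSet (⇑f) w, HsA y z = HsA w z * HsA y w)
    (hcsB : ∀ w : M, ∀ y ∈ stableSet (⇑f) w, ∀ z ∈ stableSet (⇑f) w, HsB y z = HsB w z * HsB y w)
    (hcuA : ∀ w : M, ∀ y ∈ stableSet (⇑f.symm) w, ∀ z ∈ stableSet (⇑f.symm) w,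
      HuA y z = HuA w z * HuA y w)
    (hcuB : ∀ w : M, ∀ y ∈ stableSet (⇑f.symm) w, ∀ z ∈ stableSet (⇑f.symm) w,
      HuB y z = HuB w z * HuB y w)
    -- the holonomies are close to the identity at nearby points
    (C₄ : ℝ) (hC₄ : 0 < C₄)
    (hbsA : ∀ w : M, ∀ y ∈ localStable (⇑f) ε w, ∀ z ∈ localStable (⇑f) ε w,
      ‖(HsA y z : Matrix (Fin d) (Fin d) ℝ) - 1‖ ≤ C₄ * dist y z)
    (hbsB : ∀ w : M, ∀ y ∈ localStable (⇑f) ε w, ∀ z ∈ localStable (⇑f) ε w,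
      ‖(HsB y z : Matrix (Fin d) (Fin d) ℝ) - 1‖ ≤ C₄ * dist y z)
    (hbuA : ∀ w : M, ∀ y ∈ localStable (⇑f.symm) ε w, ∀ z ∈ localStable (⇑f.symm) ε w,
      ‖(HuA y z : Matrix (Fin d) (Fin d) ℝ) - 1‖ ≤ C₄ * dist y z)
    (hbuB : ∀ w : M, ∀ y ∈ localStable (⇑f.symm) ε w, ∀ z ∈ localStable (⇑f.symm) ε w,
      ‖(HuB y z : Matrix (Fin d) (Fin d) ℝ) - 1‖ ≤ C₄ * dist y z)
    -- the stable and unstable expressions for P agree on W(x)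
    (hagree : ∀ y ∈ stableSet (⇑f) x ∩ stableSet (⇑f.symm) x,
      HsA x y * HsB y x = HuA x y * HuB y x)
    -- quantitative local product structure
    (br : M → M → M) (C₁₄ : ℝ) (hC₁₄ : 0 < C₁₄)
    (hbr : ∀ y z : M, dist y z < τ →
      br y z ∈ localStable (⇑f) ε y ∩ localStable (⇑f.symm) ε z ∧
      dist y (br y z) + dist (br y z) z ≤ C₁₄ * dist y z)
    -- W(x) is dense in the compact space M
    (hdense : Dense (stableSet (⇑f) x ∩ stableSet (⇑f.symm) x)) :
    ∃ C > (0 : ℝ), ∀ y ∈ stableSet (⇑f) x ∩ stableSet (⇑f.symm) x,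
      ∀ z ∈ stableSet (⇑f) x ∩ stableSet (⇑f.symm) x, dist y z < τ →
        ‖((HsA x y * HsB y x : GL (Fin d) ℝ) : Matrix (Fin d) (Fin d) ℝ) -
          ((HsA x z * HsB z x : GL (Fin d) ℝ) : Matrix (Fin d) (Fin d) ℝ)‖ ≤ C * dist y z :=
  stmt11_general f C₁ lam ε τ hf x HsA HsB HuA HuB hcsA hcsB hcuA hcuB C₄ hC₄ hbsA hbsB hbuA hbuB
    hagree br C₁₄ hC₁₄ hbr
end
end

section
/- Let f be a bi-Lipschitz hyperbolic homeomorphism of a compact metric space with a fixed point x, and A, B Lipschitz fiber bunched GL(d,ℝ)-cocycles with equal periodic data. With y ∈ W(x) = W^s(x) ∩ W^u(x) and p_n the periodic points of period 2n shadowing the pseudo-orbit joining f^{-n}(y) to fⁿ(y) given by the Anosov closing lemma, there exists C₇ > 0 independent of n such that ‖(Aⁿ(y))⁻¹Bⁿ(y) − (Aⁿ(p_n))⁻¹Bⁿ(p_n)‖ ≤ C₇ e^{(θ−λ)(n−n₀)} for all large n. -/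
/-!
Write `Qₙ(z) = (Aⁿ z)⁻¹ Bⁿ z`. Then `Qₙ(pₙ) = P Qₙ(y) R` with `P = (Aⁿ pₙ)⁻¹ Aⁿ y` and
`R = (Bⁿ y)⁻¹ Bⁿ pₙ`, so it suffices to bound `Qₙ(y)` uniformly in `n` and to show that `P` and
`R` are within `O(e^{(θ-λ)(n-n₀)})` of the identity.

All three follow from one telescoping estimate: `Tₙ = (Aⁿ u)⁻¹ Bⁿ v` satisfies
`Tₙ₊₁ - Tₙ = (Aⁿ u)⁻¹ (A(fⁿ u)⁻¹ B(fⁿ v) - 1) (Aⁿ u) Tₙ`, hence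
`1 + ‖Tₙ - 1‖ ≤ exp (∑ₖ ‖Aᵏ u‖ ‖(Aᵏ u)⁻¹‖ ‖A(fᵏ u)⁻¹ B(fᵏ v) - 1‖)`.
Fiber bunching bounds `‖Aᵏ u‖ ‖(Aᵏ u)⁻¹‖` by `C e^{θk}`. For `Qₙ(y)` the last factor is
`O(e^{-λk})`, because `fᵏ y → x` exponentially fast and `A(x) = B(x)` (periodic data at the
fixed point); the sum converges since `θ < λ`. For `P` and `R` it is
`O(e^{-(θ+δ)(n-k)} d(f⁻ⁿ y, fⁿ y))` by the shadowing estimate, and the sum is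
`O(e^{θn} d(f⁻ⁿ y, fⁿ y)) = O(e^{(θ-λ)(n-n₀)})`.
-/
open Filter Topology Metric Matrix
open scoped Matrix.Norms.L2Operator
noncomputable section

open Finset Real

theorem sum_range_exp_mul_le {c : ℝ} (hc : c < 0) (n : ℕ) :
    ∑ k ∈ range n, exp (c * k) ≤ (1 - exp c)⁻¹ := by
  have h : ∀ k : ℕ, exp (c * k) = exp c ^ k := fun k => by rw [mul_comm, exp_nat_mul]
  simp only [h, range_eq_Ico]
  simpa using geom_sum_Ico_le_of_lt_one (m := 0) (n := n) (exp_pos c).le (exp_lt_one_iff.2 hc)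

theorem sum_range_exp_mul_mul_exp_le {θ δ : ℝ} (hθ : 0 ≤ θ) (hδ : 0 < δ) (n : ℕ) :
    ∑ k ∈ range n, exp (θ * k) * exp (-(θ + δ) * (n - k : ℕ)) ≤
      exp (θ * n) * (1 - exp (-δ))⁻¹ := by
  calc ∑ k ∈ range n, exp (θ * k) * exp (-(θ + δ) * (n - k : ℕ))
      ≤ ∑ k ∈ range n, exp (θ * n) * exp (-δ * (n - 1 - k : ℕ)) := by
        refine sum_le_sum fun k hk => ?_
        have hk : k < n := mem_range.1 hk
        rw [← exp_add, ← exp_add, exp_le_exp, Nat.cast_sub hk.le, Nat.cast_sub (by omega),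
          Nat.cast_sub (by omega)]
        have : (k : ℝ) + 1 ≤ n := by exact_mod_cast hk
        push_cast
        nlinarith
    _ = exp (θ * n) * ∑ k ∈ range n, exp (-δ * k) := by
        rw [← mul_sum, sum_range_reflect (fun k => exp (-δ * k)) n]
    _ ≤ exp (θ * n) * (1 - exp (-δ))⁻¹ := by
        gcongr; exact sum_range_exp_mul_le (by linarith) n

theorem Real.exp_sub_one_le_mul_exp_mul {s c X : ℝ} (hs : 0 ≤ s) (hc : 0 ≤ c) (hsX : s ≤ c * X)
    (hX : X ≤ 1) : exp s - 1 ≤ c * exp c * X := by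
  have hsc : s ≤ c := hsX.trans (by nlinarith)
  have h : exp s - 1 ≤ s * exp s := by
    nlinarith [add_one_le_exp (-s), exp_pos s, exp_neg s, mul_inv_cancel₀ (exp_pos s).ne']
  calc exp s - 1 ≤ s * exp s := h
    _ ≤ (c * X) * exp c := by gcongr; linarith
    _ = c * exp c * X := by ring

theorem Real.exp_mul_mul_le_of_le_mul_exp {θ lam C D t t₀ : ℝ}
    (hD : D ≤ C * exp (-lam * (t - t₀))) :
    exp (θ * t) * D ≤ C * exp (θ * t₀) * exp ((θ - lam) * (t - t₀)) :=
  calc exp (θ * t) * D ≤ exp (θ * t) * (C * exp (-lam * (t - t₀))) := by gcongr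
    _ = C * exp (θ * t₀) * exp ((θ - lam) * (t - t₀)) := by
        rw [mul_left_comm, ← exp_add, mul_assoc, ← exp_add]; ring_nf

section NormedRing

variable {M R : Type*} [NormedRing R]

theorem Units.norm_inv_mul_sub_one_le (a b : Rˣ) :
    ‖((a⁻¹ * b : Rˣ) : R) - 1‖ ≤ ‖((a⁻¹ : Rˣ) : R)‖ * ‖(b : R) - a‖ := by
  rw [Units.val_mul, ← Units.inv_mul a, ← mul_sub]
  exact norm_mul_le _ _

variable [NormOneClass R]

theorem norm_le_one_add_norm_sub_one (p : R) : ‖p‖ ≤ 1 + ‖p - 1‖ := by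
  simpa using norm_le_norm_add_norm_sub' p 1

theorem norm_sub_mul_mul_le (p q r : R) :
    ‖q - p * q * r‖ ≤ ‖q‖ * ((1 + ‖p - 1‖) * (1 + ‖r - 1‖) - 1) := by
  have hsplit : q - p * q * r = -((p - 1) * q) - p * q * (r - 1) := by noncomm_ring
  calc ‖q - p * q * r‖ ≤ ‖p - 1‖ * ‖q‖ + ‖p‖ * ‖q‖ * ‖r - 1‖ := by
        rw [hsplit]
        refine (norm_sub_le _ _).trans (add_le_add ?_ ?_)
        · rw [norm_neg]; exact norm_mul_le _ _
        · exact (norm_mul_le _ _).trans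
            (mul_le_mul_of_nonneg_right (norm_mul_le _ _) (norm_nonneg _))
    _ ≤ ‖p - 1‖ * ‖q‖ + (1 + ‖p - 1‖) * ‖q‖ * ‖r - 1‖ := by
        gcongr; exact norm_le_one_add_norm_sub_one p
    _ = ‖q‖ * ((1 + ‖p - 1‖) * (1 + ‖r - 1‖) - 1) := by ring

theorem norm_cocycle_inv_mul_cocycle_sub_one_le (f : M → M) (A B : M → Rˣ) (u v : M) (n : ℕ) :
    ‖(((cocycle f A n u)⁻¹ * cocycle f B n v : Rˣ) : R) - 1‖ ≤
      exp (∑ k ∈ range n, ‖((cocycle f A k u : Rˣ) : R)‖ * ‖(((cocycle f A k u)⁻¹ : Rˣ) : R)‖ *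
        ‖(((A (f^[k] u))⁻¹ * B (f^[k] v) : Rˣ) : R) - 1‖) - 1 := by
  induction n with
  | zero => simp [cocycle]
  | succ n ih =>
    rw [sum_range_succ, exp_add]
    set c := cocycle f A n u
    set g := (A (f^[n] u))⁻¹ * B (f^[n] v)
    set T := c⁻¹ * cocycle f B n v
    have hstep : (((cocycle f A (n + 1) u)⁻¹ * cocycle f B (n + 1) v : Rˣ) : R) - 1 =
        ((T : R) - 1) + (c⁻¹ : Rˣ) * ((g : R) - 1) * c * T := by
      have : (cocycle f A (n + 1) u)⁻¹ * cocycle f B (n + 1) v = c⁻¹ * g * c * T := by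
        simp only [cocycle, c, g, T]; group
      rw [this]
      simp only [Units.val_mul, mul_sub, sub_mul, mul_one, Units.inv_mul, one_mul]
      abel
    set β := ‖(c : R)‖ * ‖((c⁻¹ : Rˣ) : R)‖ * ‖(g : R) - 1‖
    have hβ : ‖((c⁻¹ : Rˣ) : R) * ((g : R) - 1) * c * T‖ ≤ β * (1 + ‖(T : R) - 1‖) :=
      calc _ ≤ ‖((c⁻¹ : Rˣ) : R)‖ * ‖(g : R) - 1‖ * ‖(c : R)‖ * ‖(T : R)‖ := by
            refine (norm_mul_le _ _).trans (mul_le_mul_of_nonneg_right ?_ (norm_nonneg _))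
            refine (norm_mul_le _ _).trans (mul_le_mul_of_nonneg_right ?_ (norm_nonneg _))
            exact norm_mul_le _ _
        _ = β * ‖(T : R)‖ := by ring
        _ ≤ β * (1 + ‖(T : R) - 1‖) := by gcongr; exact norm_le_one_add_norm_sub_one _
    have hβ0 : 0 ≤ β := by positivity
    rw [hstep]
    calc _ ≤ ‖(T : R) - 1‖ + β * (1 + ‖(T : R) - 1‖) := (norm_add_le _ _).trans (by gcongr)
      _ = (1 + ‖(T : R) - 1‖) * (1 + β) - 1 := by ring
      _ ≤ _ := by gcongr <;> linarith [add_one_le_exp β]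

end NormedRing

structure CocycleBounds {M R : Type*} [PseudoMetricSpace M] [NormedRing R] (f : M → M)
    (A : M → Rˣ) (θ C a : ℝ) (L : NNReal) : Prop where
  bunched : ∀ z k, ‖((cocycle f A k z : Rˣ) : R)‖ * ‖(((cocycle f A k z)⁻¹ : Rˣ) : R)‖ ≤
    C * exp (θ * k)
  norm_inv_le : ∀ z, ‖(((A z)⁻¹ : Rˣ) : R)‖ ≤ a
  lipschitz : LipschitzWith L fun z => (A z : R)

namespace CocycleBounds

variable {M R : Type*} [PseudoMetricSpace M] [NormedRing R] {f : M → M} {A B : M → Rˣ}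
  {θ C a : ℝ} {L : NNReal}

theorem const_nonneg (hA : CocycleBounds f A θ C a L) (z : M) : 0 ≤ C := by
  simpa using (mul_nonneg (norm_nonneg _) (norm_nonneg _)).trans (hA.bunched z 0)

theorem inv_bound_nonneg (hA : CocycleBounds f A θ C a L) (z : M) : 0 ≤ a :=
  (norm_nonneg _).trans (hA.norm_inv_le z)

theorem norm_sub_le_mul_dist (hA : CocycleBounds f A θ C a L) (z w : M) :
    ‖(A z : R) - A w‖ ≤ L * dist z w := by
  rw [← dist_eq_norm]; exact hA.lipschitz.dist_le_mul z w

theorem mono {C' a' : ℝ} {L' : NNReal} (hA : CocycleBounds f A θ C a L) (hC : C ≤ C')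
    (ha : a ≤ a') (hL : L ≤ L') : CocycleBounds f A θ C' a' L' where
  bunched z k := (hA.bunched z k).trans (by gcongr)
  norm_inv_le z := (hA.norm_inv_le z).trans ha
  lipschitz := hA.lipschitz.weaken hL

variable [NormOneClass R]

theorem norm_cocycle_inv_mul_cocycle_sub_one_le_of_norm_sub_le (hA : CocycleBounds f A θ C a L)
    {u v : M} {n : ℕ} {ρ : ℕ → ℝ} (hρ : ∀ k < n, ‖(B (f^[k] v) : R) - A (f^[k] u)‖ ≤ ρ k) :
    ‖(((cocycle f A n u)⁻¹ * cocycle f B n v : Rˣ) : R) - 1‖ ≤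
      exp (C * a * ∑ k ∈ range n, exp (θ * k) * ρ k) - 1 := by
  refine (norm_cocycle_inv_mul_cocycle_sub_one_le f A B u v n).trans ?_
  gcongr
  rw [mul_sum]
  refine sum_le_sum fun k hk => ?_
  have hinv := (Units.norm_inv_mul_sub_one_le _ _).trans
    (mul_le_mul (hA.norm_inv_le _) (hρ k (mem_range.1 hk)) (norm_nonneg _)
      (hA.inv_bound_nonneg u))
  calc _ ≤ C * exp (θ * k) * (a * ρ k) :=
        mul_le_mul (hA.bunched u k) hinv (norm_nonneg _)
          ((mul_nonneg (norm_nonneg _) (norm_nonneg _)).trans (hA.bunched u k))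
    _ = C * a * (exp (θ * k) * ρ k) := by ring

theorem norm_cocycle_inv_mul_cocycle_sub_one_le_of_shadow (hA : CocycleBounds f A θ C a L)
    {δ r : ℝ} (hθ : 0 ≤ θ) (hδ : 0 < δ) (hr : 0 ≤ r) {u v : M} {n : ℕ}
    (huv : ∀ k < n, dist (f^[k] u) (f^[k] v) ≤ r * exp (-(θ + δ) * (n - k : ℕ))) :
    ‖(((cocycle f A n u)⁻¹ * cocycle f A n v : Rˣ) : R) - 1‖ ≤
      exp (C * a * L * (1 - exp (-δ))⁻¹ * (exp (θ * n) * r)) - 1 := by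
  have hρ : ∀ k < n, ‖(A (f^[k] v) : R) - A (f^[k] u)‖ ≤ L * r * exp (-(θ + δ) * (n - k : ℕ)) :=
    fun k hk => (hA.norm_sub_le_mul_dist _ _).trans
      (by rw [dist_comm, mul_assoc]; gcongr; exact huv k hk)
  refine (hA.norm_cocycle_inv_mul_cocycle_sub_one_le_of_norm_sub_le hρ).trans
    (sub_le_sub_right (exp_le_exp.2 ?_) 1)
  have hCa : 0 ≤ C * a := mul_nonneg (hA.const_nonneg u) (hA.inv_bound_nonneg u)
  calc C * a * ∑ k ∈ range n, exp (θ * k) * (L * r * exp (-(θ + δ) * (n - k : ℕ)))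
      = C * a * (L * r) * ∑ k ∈ range n, exp (θ * k) * exp (-(θ + δ) * (n - k : ℕ)) := by
        rw [mul_sum, mul_sum]; exact sum_congr rfl fun k _ => by ring
    _ ≤ C * a * (L * r) * (exp (θ * n) * (1 - exp (-δ))⁻¹) := by
        gcongr; exact sum_range_exp_mul_mul_exp_le hθ hδ n
    _ = _ := by ring

theorem norm_cocycle_inv_mul_cocycle_le (hA : CocycleBounds f A θ C a L)
    (hB : LipschitzWith L fun z => (B z : R)) {x y : M} (hAB : A x = B x) {lam D : ℝ}
    (hθ : θ < lam) (hy : ∀ k : ℕ, dist (f^[k] y) x ≤ D * exp (-lam * k)) (n : ℕ) :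
    ‖(((cocycle f A n y)⁻¹ * cocycle f B n y : Rˣ) : R)‖ ≤
      exp (C * a * (2 * L * D * (1 - exp (θ - lam))⁻¹)) := by
  have hρ : ∀ k < n, ‖(B (f^[k] y) : R) - A (f^[k] y)‖ ≤ 2 * L * D * exp (-lam * k) := by
    intro k _
    calc ‖(B (f^[k] y) : R) - A (f^[k] y)‖
        = ‖((B (f^[k] y) : R) - B x) + ((A x : R) - A (f^[k] y))‖ := by rw [hAB]; abel_nf
      _ ≤ L * dist (f^[k] y) x + L * dist x (f^[k] y) := by
          refine (norm_add_le _ _).trans (add_le_add ?_ (hA.norm_sub_le_mul_dist _ _))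
          rw [← dist_eq_norm]; exact hB.dist_le_mul _ _
      _ ≤ 2 * L * D * exp (-lam * k) := by
          rw [dist_comm x]; nlinarith [hy k, L.coe_nonneg]
  have hD : 0 ≤ D := by simpa using dist_nonneg.trans (hy 0)
  have hCa : 0 ≤ C * a := mul_nonneg (hA.const_nonneg y) (hA.inv_bound_nonneg y)
  refine (norm_le_one_add_norm_sub_one _).trans ?_
  rw [← le_sub_iff_add_le']
  refine (hA.norm_cocycle_inv_mul_cocycle_sub_one_le_of_norm_sub_le hρ).trans
    (sub_le_sub_right (exp_le_exp.2 ?_) 1)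
  calc C * a * ∑ k ∈ range n, exp (θ * k) * (2 * L * D * exp (-lam * k))
      = C * a * (2 * L * D * ∑ k ∈ range n, exp ((θ - lam) * k)) := by
        rw [mul_sum, mul_sum, mul_sum]
        exact sum_congr rfl fun k _ => by
          rw [show (θ - lam) * (k : ℝ) = θ * k + -lam * k by ring, exp_add]; ring
    _ ≤ C * a * (2 * L * D * (1 - exp (θ - lam))⁻¹) := by
        gcongr; exact sum_range_exp_mul_le (by linarith) n

theorem norm_cocycle_inv_mul_cocycle_sub_le (hA : CocycleBounds f A θ C a L)
    (hB : CocycleBounds f B θ C a L) {δ r K : ℝ} (hθ : 0 ≤ θ) (hδ : 0 < δ) (hr : 0 ≤ r)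
    {y p : M} {n : ℕ} (hK : ‖(((cocycle f A n y)⁻¹ * cocycle f B n y : Rˣ) : R)‖ ≤ K)
    (hyp : ∀ k < n, dist (f^[k] y) (f^[k] p) ≤ r * exp (-(θ + δ) * (n - k : ℕ))) :
    ‖(((cocycle f A n y)⁻¹ * cocycle f B n y : Rˣ) : R) -
        (((cocycle f A n p)⁻¹ * cocycle f B n p : Rˣ) : R)‖ ≤
      K * (exp (2 * (C * a * L * (1 - exp (-δ))⁻¹ * (exp (θ * n) * r))) - 1) := by
  have hP := hA.norm_cocycle_inv_mul_cocycle_sub_one_le_of_shadow hθ hδ hr (u := p) (v := y)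
    fun k hk => dist_comm (f^[k] p) _ ▸ hyp k hk
  have hR := hB.norm_cocycle_inv_mul_cocycle_sub_one_le_of_shadow hθ hδ hr hyp
  set s := C * a * L * (1 - exp (-δ))⁻¹ * (exp (θ * n) * r)
  have hsplit : (((cocycle f A n p)⁻¹ * cocycle f B n p : Rˣ) : R) =
      (((cocycle f A n p)⁻¹ * cocycle f A n y : Rˣ) : R) *
        (((cocycle f A n y)⁻¹ * cocycle f B n y : Rˣ) : R) *
        (((cocycle f B n y)⁻¹ * cocycle f B n p : Rˣ) : R) := by
    rw [← Units.val_mul, ← Units.val_mul]; congr 1; group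
  rw [hsplit]
  refine (norm_sub_mul_mul_le _ _ _).trans ?_
  have hK0 : 0 ≤ K := (norm_nonneg _).trans hK
  calc _ ≤ K * (exp s * exp s - 1) := by
        gcongr
        · nlinarith [norm_nonneg ((((cocycle f A n p)⁻¹ * cocycle f A n y : Rˣ) : R) - 1),
            norm_nonneg ((((cocycle f B n y)⁻¹ * cocycle f B n p : Rˣ) : R) - 1)]
        · linarith
        · linarith
    _ = K * (exp (2 * s) - 1) := by rw [two_mul, exp_add]

theorem exists_norm_cocycle_inv_mul_cocycle_sub_le (hA : CocycleBounds f A θ C a L)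
    (hB : CocycleBounds f B θ C a L) {δ K c : ℝ} (hθ : 0 ≤ θ) (hδ : 0 < δ) (hc : 0 ≤ c)
    {y : M} {p : ℕ → M} {r X : ℕ → ℝ} {n₀ : ℕ}
    (hK : ∀ n, ‖(((cocycle f A n y)⁻¹ * cocycle f B n y : Rˣ) : R)‖ ≤ K)
    (hX : ∀ n ≥ n₀, 0 ≤ X n ∧ X n ≤ 1) (hr : ∀ n ≥ n₀, 0 ≤ r n ∧ exp (θ * n) * r n ≤ c * X n)
    (hyp : ∀ n ≥ n₀, ∀ k < n,
      dist (f^[k] y) (f^[k] (p n)) ≤ r n * exp (-(θ + δ) * (n - k : ℕ))) :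
    ∃ C₇ > 0, ∀ n ≥ n₀, ‖(((cocycle f A n y)⁻¹ * cocycle f B n y : Rˣ) : R) -
        (((cocycle f A n (p n))⁻¹ * cocycle f B n (p n) : Rˣ) : R)‖ ≤ C₇ * X n := by
  set κ := C * a * L * (1 - exp (-δ))⁻¹
  have hκ : 0 ≤ κ := by
    have := hA.const_nonneg y; have := hA.inv_bound_nonneg y
    have : 0 < 1 - exp (-δ) := sub_pos.2 (exp_lt_one_iff.2 (neg_neg_of_pos hδ))
    positivity
  have hK0 : 0 ≤ K := (norm_nonneg _).trans (hK 0)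
  refine ⟨max (K * (2 * κ * c * exp (2 * κ * c))) 1, lt_max_of_lt_right one_pos, fun n hn => ?_⟩
  obtain ⟨hX0, hX1⟩ := hX n hn
  obtain ⟨hr0, hrc⟩ := hr n hn
  have hs : 2 * (κ * (exp (θ * n) * r n)) ≤ 2 * κ * c * X n := by
    nlinarith [mul_le_mul_of_nonneg_left hrc (by positivity : 0 ≤ 2 * κ)]
  refine (hA.norm_cocycle_inv_mul_cocycle_sub_le hB hθ hδ hr0 (hK n) (hyp n hn)).trans ?_
  calc _ ≤ K * (2 * κ * c * exp (2 * κ * c) * X n) := by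
        gcongr; exact exp_sub_one_le_mul_exp_mul (by positivity) (by positivity) hs hX1
    _ ≤ _ := by rw [← mul_assoc]; gcongr; exact le_max_left _ _

end CocycleBounds

theorem exists_forall_norm_units_inv_le {M R : Type*} [TopologicalSpace M] [CompactSpace M]
    [NormedRing R] [CompleteSpace R] {A : M → Rˣ} (hA : Continuous fun z => (A z : R)) :
    ∃ a, ∀ z, ‖(((A z)⁻¹ : Rˣ) : R)‖ ≤ a := by
  have hcont : Continuous fun z => (((A z)⁻¹ : Rˣ) : R) :=
    Units.continuous_coe_inv.comp (Units.isOpenEmbedding_val.continuous_iff.2 hA)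
  obtain ⟨a, ha⟩ := isCompact_univ.exists_bound_of_continuousOn hcont.continuousOn
  exact ⟨a, fun z => ha z trivial⟩

theorem exists_cocycleBounds {M : Type*} [MetricSpace M] [CompactSpace M] {d : ℕ} {f : M → M}
    {A B : M → GL (Fin d) ℝ} {θ : ℝ} (hFA : FiberBunched f A θ) (hFB : FiberBunched f B θ)
    (hA : ∃ K : NNReal, LipschitzWith K fun x => (A x : Matrix (Fin d) (Fin d) ℝ))
    (hB : ∃ K : NNReal, LipschitzWith K fun x => (B x : Matrix (Fin d) (Fin d) ℝ)) :
    ∃ C a L, CocycleBounds f A θ C a L ∧ CocycleBounds f B θ C a L := by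
  obtain ⟨CA, -, hCA⟩ := hFA
  obtain ⟨CB, -, hCB⟩ := hFB
  obtain ⟨LA, hLA⟩ := hA
  obtain ⟨LB, hLB⟩ := hB
  obtain ⟨aA, haA⟩ := exists_forall_norm_units_inv_le hLA.continuous
  obtain ⟨aB, haB⟩ := exists_forall_norm_units_inv_le hLB.continuous
  exact ⟨max CA CB, max aA aB, max LA LB,
    (CocycleBounds.mk hCA haA hLA).mono (le_max_left _ _) (le_max_left _ _) (le_max_left _ _),
    (CocycleBounds.mk hCB haB hLB).mono (le_max_right _ _) (le_max_right _ _) (le_max_right _ _)⟩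

theorem IsHyperbolic.exists_dist_iterate_le {M : Type*} [MetricSpace M] [CompactSpace M]
    {f : M ≃ M} {C₁ lam ε τ : ℝ} (hf : IsHyperbolic f C₁ lam ε τ) {x y : M}
    (hy : y ∈ stableSet f x) : ∃ D, ∀ k : ℕ, dist (f^[k] x) (f^[k] y) ≤ D * exp (-lam * k) := by
  obtain ⟨m, hm⟩ := Metric.tendsto_atTop.1 hy ε hf.eps_pos
  have hclose : ∀ j ≥ m, dist (f^[j] x) (f^[j] y) ≤ ε := fun j hj => by
    simpa [abs_of_nonneg dist_nonneg] using (hm j hj).le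
  have hcenter : f^[m] x ∈ localStable f ε (f^[m] x) := fun j => by simpa using hf.eps_pos.le
  have hloc : f^[m] y ∈ localStable f ε (f^[m] x) := fun j => by
    simpa only [← Function.iterate_add_apply] using hclose (j + m) (by omega)
  set diam := Metric.diam (Set.univ : Set M)
  have hdiam : ∀ u v : M, dist u v ≤ diam := fun u v =>
    Metric.dist_le_diam_of_mem isCompact_univ.isBounded trivial trivial
  refine ⟨(C₁ * ε + diam) * exp (lam * m), fun k => ?_⟩
  have hC₁ε : 0 ≤ C₁ * ε := mul_nonneg hf.C₁_pos.le hf.eps_pos.le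
  have hdiam0 : 0 ≤ diam := Metric.diam_nonneg
  rcases le_or_gt m k with hk | hk
  · obtain ⟨j, rfl⟩ := Nat.exists_eq_add_of_le' hk
    have hcontr := hf.stable_contr _ _ _ hcenter hloc j
    simp only [← Function.iterate_add_apply] at hcontr
    calc dist (f^[j + m] x) (f^[j + m] y)
        ≤ C₁ * exp (-lam * j) * ε :=
          hcontr.trans (mul_le_mul_of_nonneg_left (hclose m le_rfl) (mul_pos hf.C₁_pos (exp_pos _)).le)
      _ = C₁ * ε * (exp (lam * m) * exp (-lam * (j + m : ℕ))) := by
          rw [← exp_add]; push_cast; ring_nf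
      _ ≤ (C₁ * ε + diam) * exp (lam * m) * exp (-lam * (j + m : ℕ)) := by
          rw [← mul_assoc]; gcongr; linarith
  · calc dist (f^[k] x) (f^[k] y) ≤ diam * 1 := by rw [mul_one]; exact hdiam _ _
      _ ≤ (C₁ * ε + diam) * (exp (lam * m) * exp (-lam * k)) := by
          gcongr; · linarith
          rw [← exp_add, one_le_exp_iff]
          have : (k : ℝ) ≤ m := by exact_mod_cast hk.le
          nlinarith [hf.lam_pos]
      _ = (C₁ * ε + diam) * exp (lam * m) * exp (-lam * k) := by ring

theorem Equiv.iterate_add_iterate_symm {M : Type*} (f : M ≃ M) (n k : ℕ) (z : M) :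
    f^[n + k] (f.symm^[n] z) = f^[k] z := by
  rw [add_comm, Function.iterate_add_apply]
  exact congrArg f^[k] (f.right_inv.iterate n z)

theorem stmt18_general {M : Type*} [MetricSpace M] [CompactSpace M] {d : ℕ}
    (f : M ≃ M) (C₁ lam ε τ : ℝ) (hf : IsHyperbolic f C₁ lam ε τ)
    (x : M) (hx : f x = x)
    (A B : M → GL (Fin d) ℝ)
    (hA : ∃ K : NNReal, LipschitzWith K fun x => (A x : Matrix (Fin d) (Fin d) ℝ))
    (hB : ∃ K : NNReal, LipschitzWith K fun x => (B x : Matrix (Fin d) (Fin d) ℝ))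
    (θ : ℝ) (hθ0 : 0 < θ) (hθ : θ < lam)
    (hFA : FiberBunched (⇑f) A θ) (hFB : FiberBunched (⇑f) B θ)
    (hper : ∀ (p : M) (m : ℕ), 0 < m → (⇑f)^[m] p = p →
      cocycle (⇑f) A m p = cocycle (⇑f) B m p)
    (y : M) (hy : y ∈ stableSet (⇑f) x ∩ stableSet (⇑f.symm) x)
    (δ : ℝ) (hδ : 0 < δ)
    (C₅ C₆ : ℝ) (hC₅ : 0 < C₅) (hC₆ : 0 < C₆) (n₀ : ℕ)
    (hD : ∀ n ≥ n₀, dist ((⇑f.symm)^[n] y) ((⇑f)^[n] y) ≤ C₆ * Real.exp (-lam * ((n : ℝ) - n₀)))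
    (p : ℕ → M)
    (hp : ∀ n : ℕ, (⇑f)^[2 * n] (p n) = p n ∧ ∀ j ≤ 2 * n,
      dist ((⇑f)^[j] ((⇑f.symm)^[n] (p n))) ((⇑f)^[j] ((⇑f.symm)^[n] y)) ≤
        C₅ * Real.exp (-(θ + δ) * (↑(min j (2 * n - j)) : ℝ)) *
          dist ((⇑f.symm)^[n] y) ((⇑f)^[n] y)) :
    ∃ C₇ > (0 : ℝ), ∃ n₁ : ℕ, ∀ n ≥ n₁,
      ‖((((cocycle (⇑f) A n y)⁻¹ * cocycle (⇑f) B n y : GL (Fin d) ℝ)) :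
          Matrix (Fin d) (Fin d) ℝ) -
        ((((cocycle (⇑f) A n (p n))⁻¹ * cocycle (⇑f) B n (p n) : GL (Fin d) ℝ)) :
          Matrix (Fin d) (Fin d) ℝ)‖ ≤ C₇ * Real.exp ((θ - lam) * ((n : ℝ) - n₀)) := by
  -- for `d = 0` every matrix vanishes; otherwise the L² operator norm satisfies `‖1‖ = 1`
  rcases isEmpty_or_nonempty (Fin d) with hd | hd
  · refine ⟨1, one_pos, 0, fun n _ => ?_⟩
    simp only [Subsingleton.elim (_ - _ : Matrix (Fin d) (Fin d) ℝ) 0, norm_zero]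
    positivity
  obtain ⟨C, a, L, hA', hB'⟩ := exists_cocycleBounds hFA hFB hA hB
  have hAB : A x = B x := by simpa [cocycle] using hper x 1 one_pos (by simpa using hx)
  obtain ⟨D, hxy⟩ := hf.exists_dist_iterate_le hy.1
  have hK := hA'.norm_cocycle_inv_mul_cocycle_le hB'.lipschitz hAB hθ (D := D) fun k => by
    simpa [Function.iterate_fixed hx, dist_comm] using hxy k
  have hX : ∀ n ≥ n₀, (θ - lam) * ((n : ℝ) - n₀) ≤ 0 := fun n hn =>
    mul_nonpos_of_nonpos_of_nonneg (by linarith) (sub_nonneg.2 (Nat.cast_le.2 hn))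
  have hshadow : ∀ n ≥ n₀, ∀ k < n, dist (f^[k] y) (f^[k] (p n)) ≤
      C₅ * dist ((⇑f.symm)^[n] y) ((⇑f)^[n] y) * exp (-(θ + δ) * (n - k : ℕ)) := by
    intro n _ k hk
    have h := (hp n).2 (n + k) (by omega)
    rw [f.iterate_add_iterate_symm, f.iterate_add_iterate_symm,
      show min (n + k) (2 * n - (n + k)) = n - k by omega, dist_comm] at h
    linarith
  obtain ⟨C₇, hC₇, hle⟩ := hA'.exists_norm_cocycle_inv_mul_cocycle_sub_le hB' hθ0.le hδ
    (c := C₅ * C₆ * exp (θ * n₀)) (by positivity) hK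
    (fun n hn => ⟨(exp_pos _).le, exp_le_one_iff.2 (hX n hn)⟩)
    (fun n hn => ⟨by positivity, by
      nlinarith [mul_le_mul_of_nonneg_left (exp_mul_mul_le_of_le_mul_exp (θ := θ) (hD n hn)) hC₅.le]⟩)
    hshadow
  exact ⟨C₇, hC₇, n₀, hle⟩

/-- comparison of `(Aⁿ)⁻¹Bⁿ` along `y ∈ W(x)` and along the shadowing periodic
points `p_n` of period `2n`: `‖(Aⁿ(y))⁻¹Bⁿ(y) − (Aⁿ(p_n))⁻¹Bⁿ(p_n)‖ ≤ C₇ e^{(θ−λ)(n−n₀)}`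
for all large `n`, with `C₇` independent of `n`. -/
theorem stmt18 {M : Type*} [MetricSpace M] [CompactSpace M] {d : ℕ}
    (f : M ≃ M) (C₁ lam ε τ : ℝ) (hf : IsHyperbolic f C₁ lam ε τ)
    (hbil : ∃ K : NNReal, LipschitzWith K ⇑f ∧ LipschitzWith K ⇑f.symm)
    (x : M) (hx : f x = x)
    (A B : M → GL (Fin d) ℝ)
    (hA : ∃ K : NNReal, LipschitzWith K fun x => (A x : Matrix (Fin d) (Fin d) ℝ))
    (hB : ∃ K : NNReal, LipschitzWith K fun x => (B x : Matrix (Fin d) (Fin d) ℝ))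
    (θ : ℝ) (hθ0 : 0 < θ) (hθ : θ < lam)
    (hFA : FiberBunched (⇑f) A θ) (hFB : FiberBunched (⇑f) B θ)
    (hper : ∀ (p : M) (m : ℕ), 0 < m → (⇑f)^[m] p = p →
      cocycle (⇑f) A m p = cocycle (⇑f) B m p)
    (y : M) (hy : y ∈ stableSet (⇑f) x ∩ stableSet (⇑f.symm) x)
    (δ : ℝ) (hδ : 0 < δ) (hθδ : θ + δ < lam)
    (C₅ C₆ : ℝ) (hC₅ : 0 < C₅) (hC₆ : 0 < C₆) (n₀ : ℕ)
    (hD : ∀ n ≥ n₀, dist ((⇑f.symm)^[n] y) ((⇑f)^[n] y) ≤ C₆ * Real.exp (-lam * ((n : ℝ) - n₀)))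
    (p : ℕ → M)
    (hp : ∀ n : ℕ, (⇑f)^[2 * n] (p n) = p n ∧ ∀ j ≤ 2 * n,
      dist ((⇑f)^[j] ((⇑f.symm)^[n] (p n))) ((⇑f)^[j] ((⇑f.symm)^[n] y)) ≤
        C₅ * Real.exp (-(θ + δ) * (↑(min j (2 * n - j)) : ℝ)) *
          dist ((⇑f.symm)^[n] y) ((⇑f)^[n] y)) :
    ∃ C₇ > (0 : ℝ), ∃ n₁ : ℕ, ∀ n ≥ n₁,
      ‖((((cocycle (⇑f) A n y)⁻¹ * cocycle (⇑f) B n y : GL (Fin d) ℝ)) :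
          Matrix (Fin d) (Fin d) ℝ) -
        ((((cocycle (⇑f) A n (p n))⁻¹ * cocycle (⇑f) B n (p n) : GL (Fin d) ℝ)) :
          Matrix (Fin d) (Fin d) ℝ)‖ ≤ C₇ * Real.exp ((θ - lam) * ((n : ℝ) - n₀)) :=
  stmt18_general f C₁ lam ε τ hf x hx A B hA hB θ hθ0 hθ hFA hFB hper y hy δ hδ C₅ C₆ hC₅ hC₆ n₀ hD
    p hp
end
end
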